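/- arXiv:1510.02762 — 7 statements merged into one kernel-verified Lean document; each statement's English description precedes it below -/
import Mathlib

section
/- Let n, k ≥ 1 and suppose h_1, …, h_{kn} : [a,b] → ℝ^n are linearly independent solutions of the Jacobi equation satisfying h_i^{(j)}(a) = 0 for all i = 1, …, kn and j = 0, 1, …, k−1, and let W(t) be the determinant of the kn × kn matrix whose i-th row is the concatenation (h_i(t)ᵀ, h_i'(t)ᵀ, …, h_i^{(k−1)}(t)ᵀ). Then for t* ∈ (a,b], W(t*) = 0 if and only if there exists a solution h of the Jacobi equation, not identically zero, such that h^{(j)}(a) = h^{(j)}(t*) = 0 for all j = 0, 1, …, k−1. -/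
open Matrix

/-- The momenta `p_j` of the `k`-th order quadratic Lagrangian determined by the
matrix coefficients `M`: `p_0 = M₀₀h + M₀₁h'`,
`p_j = M_jj h^{(j)} + M_{(j−1)j}ᵀ h^{(j−1)} + M_{j(j+1)} h^{(j+1)}` for `1 ≤ j ≤ k−1`,
and `p_k = M_kk h^{(k)} + M_{(k−1)k}ᵀ h^{(k−1)}`. -/
noncomputable def pMom (n k : ℕ) (M : ℕ → ℕ → ℝ → Matrix (Fin n) (Fin n) ℝ)
    (h : ℝ → Fin n → ℝ) (j : ℕ) : ℝ → Fin n → ℝ := fun t =>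
  if j = 0 then M 0 0 t *ᵥ h t + M 0 1 t *ᵥ iteratedDeriv 1 h t
  else if j = k then
    M k k t *ᵥ iteratedDeriv k h t + (M (k - 1) k t)ᵀ *ᵥ iteratedDeriv (k - 1) h t
  else
    M j j t *ᵥ iteratedDeriv j h t + (M (j - 1) j t)ᵀ *ᵥ iteratedDeriv (j - 1) h t +
      M j (j + 1) t *ᵥ iteratedDeriv (j + 1) h t

/-- The Jacobi equation `∑_{j=0}^k (−1)^j (d/dt)^j p_j(t) = 0` on `[a,b]`. -/
noncomputable def IsJacobiSolution (n k : ℕ) (M : ℕ → ℕ → ℝ → Matrix (Fin n) (Fin n) ℝ)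
    (a b : ℝ) (h : ℝ → Fin n → ℝ) : Prop :=
  ContDiff ℝ (⊤ : ℕ∞) h ∧ ∀ t ∈ Set.Icc a b,
    ∑ j ∈ Finset.range (k + 1), ((-1 : ℝ) ^ j) • iteratedDeriv j (pMom n k M h j) t = 0


variable {n : ℕ}

lemma contDiff_top_deriv {E : Type*} [NormedAddCommGroup E] [NormedSpace ℝ E]
    {f : ℝ → E} (h : ContDiff ℝ (⊤ : ℕ∞) f) : ContDiff ℝ (⊤ : ℕ∞) (deriv f) := by
  have h' : ContDiff ℝ (((⊤ : ℕ∞) : WithTop ℕ∞) + 1) f := by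
    exact h.of_le (by rw [← WithTop.coe_one, ← WithTop.coe_add, top_add])
  exact (contDiff_succ_iff_deriv.mp h').2.2

lemma contDiff_top_iteratedDeriv {E : Type*} [NormedAddCommGroup E] [NormedSpace ℝ E]
    {f : ℝ → E} (h : ContDiff ℝ (⊤ : ℕ∞) f) (m : ℕ) : ContDiff ℝ (⊤ : ℕ∞) (iteratedDeriv m f) := by
  induction m with
  | zero => simpa [iteratedDeriv_zero]
  | succ m ih => rw [iteratedDeriv_succ]; exact contDiff_top_deriv ih

lemma contDiff_pi_comp {f : ℝ → Fin n → ℝ} (h : ContDiff ℝ (⊤ : ℕ∞) f) (c : Fin n) :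
    ContDiff ℝ (⊤ : ℕ∞) fun t => f t c := (contDiff_pi.mp h) c

lemma contDiff_mulVec {B : ℝ → Matrix (Fin n) (Fin n) ℝ} {u : ℝ → Fin n → ℝ}
    (hB : ∀ r c, ContDiff ℝ (⊤ : ℕ∞) fun t => B t r c) (hu : ContDiff ℝ (⊤ : ℕ∞) u) :
    ContDiff ℝ (⊤ : ℕ∞) fun t => B t *ᵥ u t := by
  rw [contDiff_pi]
  intro r
  have : (fun t => (B t *ᵥ u t) r) = fun t => ∑ c, B t r c * u t c := by
    funext t; simp [Matrix.mulVec, dotProduct]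
  rw [this]
  exact ContDiff.sum fun c _ => (hB r c).mul (contDiff_pi_comp hu c)

lemma hasDerivAt_mulVec {B : ℝ → Matrix (Fin n) (Fin n) ℝ} {u : ℝ → Fin n → ℝ}
    {B' : Matrix (Fin n) (Fin n) ℝ} {u' : Fin n → ℝ} {t : ℝ}
    (hB : ∀ r c, HasDerivAt (fun s => B s r c) (B' r c) t)
    (hu : HasDerivAt u u' t) :
    HasDerivAt (fun s => B s *ᵥ u s) (B' *ᵥ u t + B t *ᵥ u') t := by
  rw [hasDerivAt_pi]
  intro r
  have h1 : HasDerivAt (fun s => ∑ c, B s r c * u s c)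
      (∑ c, (B' r c * u t c + B t r c * u' c)) t :=
    HasDerivAt.fun_sum fun c _ => (hB r c).mul ((hasDerivAt_pi.mp hu) c)
  have e1 : (fun s => (B s *ᵥ u s) r) = fun s => ∑ c, B s r c * u s c := by
    funext s; simp [Matrix.mulVec, dotProduct]
  have e2 : (B' *ᵥ u t + B t *ᵥ u') r = ∑ c, (B' r c * u t c + B t r c * u' c) := by
    simp [Matrix.mulVec, dotProduct, Finset.sum_add_distrib]
  rw [e1, e2]
  exact h1

lemma leibniz_mulVec (B : ℝ → Matrix (Fin n) (Fin n) ℝ)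
    (hB : ∀ r c, ContDiff ℝ (⊤ : ℕ∞) fun t => B t r c) (i j : ℕ) :
    ∃ C : ℕ → ℝ → Matrix (Fin n) (Fin n) ℝ,
      (∀ l r c, ContDiff ℝ (⊤ : ℕ∞) fun t => C l t r c) ∧ C j = B ∧
      ∀ g : ℝ → Fin n → ℝ, ContDiff ℝ (⊤ : ℕ∞) g → ∀ t,
        iteratedDeriv j (fun s => B s *ᵥ iteratedDeriv i g s) t
          = ∑ l ∈ Finset.range (j + 1), C l t *ᵥ iteratedDeriv (i + l) g t := by
  induction j with
  | zero =>
    refine ⟨fun _ => B, fun _ => hB, rfl, fun g hg t => ?_⟩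
    simp [iteratedDeriv_zero]
  | succ j ih =>
    obtain ⟨C, hCs, hCj, hC⟩ := ih
    set Cd : ℕ → ℝ → Matrix (Fin n) (Fin n) ℝ :=
      fun l t => Matrix.of fun r c => deriv (fun s => C l s r c) t with hCd
    refine ⟨fun l t => (if l ≤ j then Cd l t else 0) + (if 1 ≤ l then C (l - 1) t else 0),
      ?_, ?_, ?_⟩
    · intro l r c
      have : (fun t => ((if l ≤ j then Cd l t else 0) + (if 1 ≤ l then C (l - 1) t else 0)) r c)
          = fun t => (if l ≤ j then deriv (fun s => C l s r c) t else 0)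
              + (if 1 ≤ l then C (l - 1) t r c else 0) := by
        funext t
        simp only [Matrix.add_apply]
        congr 1 <;> split_ifs <;> simp [hCd]
      rw [this]
      apply ContDiff.add <;> split_ifs
      · exact contDiff_top_deriv (hCs l r c)
      · exact contDiff_const
      · exact hCs (l - 1) r c
      · exact contDiff_const
    · funext t
      simp [Nat.not_succ_le_self, hCj]
    · intro g hg t
      rw [iteratedDeriv_succ]
      have hfun : iteratedDeriv j (fun s => B s *ᵥ iteratedDeriv i g s)
          = fun s => ∑ l ∈ Finset.range (j + 1), C l s *ᵥ iteratedDeriv (i + l) g s :=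
        funext (hC g hg)
      rw [hfun]
      have hterm : ∀ l ∈ Finset.range (j + 1),
          HasDerivAt (fun s => C l s *ᵥ iteratedDeriv (i + l) g s)
            (Cd l t *ᵥ iteratedDeriv (i + l) g t + C l t *ᵥ iteratedDeriv (i + l + 1) g t) t := by
        intro l _
        apply hasDerivAt_mulVec
        · intro r c
          exact (((hCs l r c).differentiable (by simp)) t).hasDerivAt
        · have hd : DifferentiableAt ℝ (iteratedDeriv (i + l) g) t :=
            ((contDiff_top_iteratedDeriv hg (i + l)).differentiable (by simp)) t
          have h2 := hd.hasDerivAt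
          rw [iteratedDeriv_succ]
          exact h2
      have hsum := HasDerivAt.fun_sum hterm
      rw [hsum.deriv]
      rw [Finset.sum_add_distrib]
      have e1 : ∑ l ∈ Finset.range (j + 1 + 1),
            ((if l ≤ j then Cd l t else 0) + (if 1 ≤ l then C (l - 1) t else 0)) *ᵥ
              iteratedDeriv (i + l) g t
          = (∑ l ∈ Finset.range (j + 1 + 1),
              (if l ≤ j then Cd l t *ᵥ iteratedDeriv (i + l) g t else 0))
            + ∑ l ∈ Finset.range (j + 1 + 1),
              (if 1 ≤ l then C (l - 1) t *ᵥ iteratedDeriv (i + l) g t else 0) := by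
        rw [← Finset.sum_add_distrib]
        refine Finset.sum_congr rfl fun l _ => ?_
        rw [Matrix.add_mulVec]
        congr 1 <;> split_ifs <;> simp [Matrix.zero_mulVec]
      rw [e1]
      congr 1
      · have e2 : ∑ l ∈ Finset.range (j + 1 + 1),
            (if l ≤ j then Cd l t *ᵥ iteratedDeriv (i + l) g t else 0)
            = ∑ l ∈ Finset.range (j + 1), Cd l t *ᵥ iteratedDeriv (i + l) g t := by
          rw [Finset.sum_range_succ, if_neg (Nat.not_succ_le_self j), add_zero]
          exact Finset.sum_congr rfl fun l hl =>
            if_pos (Nat.lt_succ_iff.mp (Finset.mem_range.mp hl))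
        rw [e2]
      · have e3 : ∑ l ∈ Finset.range (j + 1 + 1),
            (if 1 ≤ l then C (l - 1) t *ᵥ iteratedDeriv (i + l) g t else 0)
            = ∑ l ∈ Finset.range (j + 1), C l t *ᵥ iteratedDeriv (i + l + 1) g t := by
          rw [Finset.sum_range_succ']
          rw [if_neg (by norm_num), add_zero]
          refine Finset.sum_congr rfl fun l hl => ?_
          rw [if_pos (Nat.le_add_left 1 l)]
          simp [Nat.add_sub_cancel, ← add_assoc]
        rw [e3]

lemma matrix_sum_mulVec {ι : Type*} (s : Finset ι) (f : ι → Matrix (Fin n) (Fin n) ℝ)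
    (v : Fin n → ℝ) : (∑ l ∈ s, f l) *ᵥ v = ∑ l ∈ s, f l *ᵥ v := by
  classical
  induction s using Finset.induction with
  | empty => simp [Matrix.zero_mulVec]
  | insert _ _ h ih => rw [Finset.sum_insert h, Finset.sum_insert h, Matrix.add_mulVec, ih]

lemma term_data (B : ℝ → Matrix (Fin n) (Fin n) ℝ)
    (hB : ∀ r c, ContDiff ℝ (⊤ : ℕ∞) fun t => B t r c) (i J N : ℕ) (hiJ : i + J ≤ N) :
    ∃ D : ℕ → ℝ → Matrix (Fin n) (Fin n) ℝ,
      (∀ m r c, ContDiff ℝ (⊤ : ℕ∞) fun t => D m t r c) ∧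
      (D N = if i + J = N then B else fun _ => 0) ∧
      ∀ g : ℝ → Fin n → ℝ, ContDiff ℝ (⊤ : ℕ∞) g → ∀ t,
        iteratedDeriv J (fun s => B s *ᵥ iteratedDeriv i g s) t
          = ∑ m ∈ Finset.range (N + 1), D m t *ᵥ iteratedDeriv m g t := by
  obtain ⟨C, hCs, hCj, hC⟩ := leibniz_mulVec B hB i J
  refine ⟨fun m t => ∑ l ∈ Finset.range (J + 1), if i + l = m then C l t else 0, ?_, ?_, ?_⟩
  · intro m r c
    have e : (fun t => (∑ l ∈ Finset.range (J + 1),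
          if i + l = m then C l t else 0) r c)
        = fun t => ∑ l ∈ Finset.range (J + 1), (if i + l = m then C l t r c else 0) := by
      funext t
      simp [Matrix.sum_apply, apply_ite (fun X : Matrix (Fin n) (Fin n) ℝ => X r c)]
    rw [e]
    exact ContDiff.sum fun l _ => by split_ifs; exacts [hCs l r c, contDiff_const]
  · by_cases hc : i + J = N
    · rw [if_pos hc]; funext t
      show (∑ l ∈ Finset.range (J + 1), if i + l = N then C l t else 0) = B t
      rw [Finset.sum_eq_single_of_mem J (Finset.self_mem_range_succ J)]
      · rw [if_pos hc, hCj]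
      · intro l hl hlJ
        exact if_neg (by have := Finset.mem_range.mp hl; omega)
    · rw [if_neg hc]; funext t
      show (∑ l ∈ Finset.range (J + 1), if i + l = N then C l t else 0) = 0
      exact Finset.sum_eq_zero fun l hl =>
        if_neg (by have := Finset.mem_range.mp hl; omega)
  · intro g hg t
    calc iteratedDeriv J (fun s => B s *ᵥ iteratedDeriv i g s) t
        = ∑ l ∈ Finset.range (J + 1), C l t *ᵥ iteratedDeriv (i + l) g t := hC g hg t
      _ = ∑ l ∈ Finset.range (J + 1), ∑ m ∈ Finset.range (N + 1),
            (if m = i + l then C l t *ᵥ iteratedDeriv m g t else 0) := by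
          refine Finset.sum_congr rfl fun l hl => ?_
          rw [Finset.sum_ite_eq' (Finset.range (N + 1)) (i + l)
            (fun m => C l t *ᵥ iteratedDeriv m g t)]
          rw [if_pos (Finset.mem_range.mpr (by have := Finset.mem_range.mp hl; omega))]
      _ = ∑ m ∈ Finset.range (N + 1), ∑ l ∈ Finset.range (J + 1),
            (if m = i + l then C l t *ᵥ iteratedDeriv m g t else 0) := Finset.sum_comm
      _ = ∑ m ∈ Finset.range (N + 1),
            (∑ l ∈ Finset.range (J + 1), if i + l = m then C l t else 0) *ᵥ
              iteratedDeriv m g t := by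
          refine Finset.sum_congr rfl fun m hm => ?_
          rw [matrix_sum_mulVec]
          refine Finset.sum_congr rfl fun l hl => ?_
          rcases eq_or_ne (i + l) m with h | h
          · rw [if_pos h.symm, if_pos h]
          · rw [if_neg (Ne.symm h), if_neg h, Matrix.zero_mulVec]

lemma iteratedDeriv_add' {f g : ℝ → Fin n → ℝ} (hf : ContDiff ℝ (⊤ : ℕ∞) f) (hg : ContDiff ℝ (⊤ : ℕ∞) g)
    (m : ℕ) (t : ℝ) :
    iteratedDeriv m (fun s => f s + g s) t = iteratedDeriv m f t + iteratedDeriv m g t := by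
  have : (fun s => f s + g s) = f + g := rfl
  rw [this, ← iteratedDerivWithin_univ, ← iteratedDerivWithin_univ, ← iteratedDerivWithin_univ]
  exact iteratedDerivWithin_add (Set.mem_univ t) uniqueDiffOn_univ
    ((hf.of_le (by exact_mod_cast le_top)).contDiffWithinAt) ((hg.of_le (by exact_mod_cast le_top)).contDiffWithinAt)

lemma pMom_data (k : ℕ) (hk : 1 ≤ k) (M : ℕ → ℕ → ℝ → Matrix (Fin n) (Fin n) ℝ)
    (hM : ∀ i j r c, ContDiff ℝ (⊤ : ℕ∞) fun t => M i j t r c) (j : ℕ) (hj : j ≤ k) :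
    ∃ D : ℕ → ℝ → Matrix (Fin n) (Fin n) ℝ,
      (∀ m r c, ContDiff ℝ (⊤ : ℕ∞) fun t => D m t r c) ∧
      (D (2 * k) = if j = k then M k k else fun _ => 0) ∧
      ∀ g : ℝ → Fin n → ℝ, ContDiff ℝ (⊤ : ℕ∞) g → ∀ t,
        iteratedDeriv j (pMom n k M g j) t
          = ∑ m ∈ Finset.range (2 * k + 1), D m t *ᵥ iteratedDeriv m g t := by
  rcases eq_or_ne j 0 with rfl | hj0
  · obtain ⟨D1, hD1s, hD1t, hD1⟩ := term_data (M 0 0) (hM 0 0) 0 0 (2 * k) (by omega)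
    obtain ⟨D2, hD2s, hD2t, hD2⟩ := term_data (M 0 1) (hM 0 1) 1 0 (2 * k) (by omega)
    refine ⟨fun m t => D1 m t + D2 m t, ?_, ?_, ?_⟩
    · intro m r c
      have e : (fun t => (D1 m t + D2 m t) r c) = fun t => D1 m t r c + D2 m t r c := by
        funext t; simp [Matrix.add_apply]
      rw [e]; exact (hD1s m r c).add (hD2s m r c)
    · rw [if_neg (by omega)]
      have e1 : D1 (2 * k) = fun _ => (0 : Matrix (Fin n) (Fin n) ℝ) := by
        rw [hD1t, if_neg (by omega)]
      have e2 : D2 (2 * k) = fun _ => (0 : Matrix (Fin n) (Fin n) ℝ) := by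
        rw [hD2t, if_neg (by omega)]
      funext t
      show D1 (2 * k) t + D2 (2 * k) t = 0
      rw [congrFun e1 t, congrFun e2 t, add_zero]
    · intro g hg t
      have hp : pMom n k M g 0 = fun s =>
          (fun u => M 0 0 u *ᵥ iteratedDeriv 0 g u) s
            + (fun u => M 0 1 u *ᵥ iteratedDeriv 1 g u) s := by
        funext s; simp [pMom]
      rw [hp, iteratedDeriv_add'
        (contDiff_mulVec (hM 0 0) (contDiff_top_iteratedDeriv hg 0))
        (contDiff_mulVec (hM 0 1) (contDiff_top_iteratedDeriv hg 1)),
        hD1 g hg t, hD2 g hg t, ← Finset.sum_add_distrib]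
      exact Finset.sum_congr rfl fun m _ => (Matrix.add_mulVec _ _ _).symm
  · rcases eq_or_ne j k with rfl | hjk
    · obtain ⟨D1, hD1s, hD1t, hD1⟩ := term_data (M j j) (hM j j) j j (2 * j) (by omega)
      obtain ⟨D2, hD2s, hD2t, hD2⟩ := term_data (fun t => (M (j - 1) j t)ᵀ)
        (fun r c => hM (j - 1) j c r) (j - 1) j (2 * j) (by omega)
      refine ⟨fun m t => D1 m t + D2 m t, ?_, ?_, ?_⟩
      · intro m r c
        have e : (fun t => (D1 m t + D2 m t) r c) = fun t => D1 m t r c + D2 m t r c := by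
          funext t; simp [Matrix.add_apply]
        rw [e]; exact (hD1s m r c).add (hD2s m r c)
      · rw [if_pos rfl]
        have e1 : D1 (2 * j) = M j j := by rw [hD1t, if_pos (by omega)]
        have e2 : D2 (2 * j) = fun _ => (0 : Matrix (Fin n) (Fin n) ℝ) := by
          rw [hD2t, if_neg (by omega)]
        funext t
        show D1 (2 * j) t + D2 (2 * j) t = M j j t
        rw [congrFun e1 t, congrFun e2 t, add_zero]
      · intro g hg t
        have hp : pMom n j M g j = fun s =>
            (fun u => M j j u *ᵥ iteratedDeriv j g u) s
              + (fun u => (M (j - 1) j u)ᵀ *ᵥ iteratedDeriv (j - 1) g u) s := by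
          funext s; simp [pMom, hj0]
        rw [hp, iteratedDeriv_add'
          (contDiff_mulVec (hM j j) (contDiff_top_iteratedDeriv hg j))
          (contDiff_mulVec (B := fun t => (M (j - 1) j t)ᵀ) (fun r c => hM (j - 1) j c r)
            (contDiff_top_iteratedDeriv hg (j - 1))),
          hD1 g hg t, hD2 g hg t, ← Finset.sum_add_distrib]
        exact Finset.sum_congr rfl fun m _ => (Matrix.add_mulVec _ _ _).symm
    · have hjk' : j < k := lt_of_le_of_ne hj hjk
      obtain ⟨D1, hD1s, hD1t, hD1⟩ := term_data (M j j) (hM j j) j j (2 * k) (by omega)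
      obtain ⟨D2, hD2s, hD2t, hD2⟩ := term_data (fun t => (M (j - 1) j t)ᵀ)
        (fun r c => hM (j - 1) j c r) (j - 1) j (2 * k) (by omega)
      obtain ⟨D3, hD3s, hD3t, hD3⟩ := term_data (M j (j + 1)) (hM j (j + 1)) (j + 1) j
        (2 * k) (by omega)
      refine ⟨fun m t => D1 m t + D2 m t + D3 m t, ?_, ?_, ?_⟩
      · intro m r c
        have e : (fun t => (D1 m t + D2 m t + D3 m t) r c)
            = fun t => D1 m t r c + D2 m t r c + D3 m t r c := by
          funext t; simp [Matrix.add_apply]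
        rw [e]; exact ((hD1s m r c).add (hD2s m r c)).add (hD3s m r c)
      · rw [if_neg hjk]
        have e1 : D1 (2 * k) = fun _ => (0 : Matrix (Fin n) (Fin n) ℝ) := by
          rw [hD1t, if_neg (by omega)]
        have e2 : D2 (2 * k) = fun _ => (0 : Matrix (Fin n) (Fin n) ℝ) := by
          rw [hD2t, if_neg (by omega)]
        have e3 : D3 (2 * k) = fun _ => (0 : Matrix (Fin n) (Fin n) ℝ) := by
          rw [hD3t, if_neg (by omega)]
        funext t
        show D1 (2 * k) t + D2 (2 * k) t + D3 (2 * k) t = 0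
        rw [congrFun e1 t, congrFun e2 t, congrFun e3 t, add_zero, add_zero]
      · intro g hg t
        have hp : pMom n k M g j = fun s =>
            ((fun u => M j j u *ᵥ iteratedDeriv j g u) s
              + (fun u => (M (j - 1) j u)ᵀ *ᵥ iteratedDeriv (j - 1) g u) s)
              + (fun u => M j (j + 1) u *ᵥ iteratedDeriv (j + 1) g u) s := by
          funext s; simp [pMom, hj0, hjk]
        have hc1 := contDiff_mulVec (hM j j) (contDiff_top_iteratedDeriv hg j)
        have hc2 := contDiff_mulVec (B := fun t => (M (j - 1) j t)ᵀ)
          (fun r c => hM (j - 1) j c r) (contDiff_top_iteratedDeriv hg (j - 1))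
        have hc3 := contDiff_mulVec (hM j (j + 1)) (contDiff_top_iteratedDeriv hg (j + 1))
        rw [hp, iteratedDeriv_add' (hc1.add hc2) hc3, iteratedDeriv_add' hc1 hc2,
          hD1 g hg t, hD2 g hg t, hD3 g hg t, ← Finset.sum_add_distrib,
          ← Finset.sum_add_distrib]
        refine Finset.sum_congr rfl fun m _ => ?_
        rw [Matrix.add_mulVec, Matrix.add_mulVec]

lemma jacobi_structure (k : ℕ) (hk : 1 ≤ k) (M : ℕ → ℕ → ℝ → Matrix (Fin n) (Fin n) ℝ)
    (hM : ∀ i j r c, ContDiff ℝ (⊤ : ℕ∞) fun t => M i j t r c) :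
    ∃ A : ℕ → ℝ → Matrix (Fin n) (Fin n) ℝ,
      (∀ m r c, ContDiff ℝ (⊤ : ℕ∞) fun t => A m t r c) ∧
      ∀ g : ℝ → Fin n → ℝ, ContDiff ℝ (⊤ : ℕ∞) g → ∀ t,
        ∑ j ∈ Finset.range (k + 1), ((-1 : ℝ) ^ j) • iteratedDeriv j (pMom n k M g j) t
          = ((-1 : ℝ) ^ k) • (M k k t *ᵥ iteratedDeriv (2 * k) g t)
            + ∑ m ∈ Finset.range (2 * k), A m t *ᵥ iteratedDeriv m g t := by
  have hP : ∀ j, ∃ D : ℕ → ℝ → Matrix (Fin n) (Fin n) ℝ, j ≤ k →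
      ((∀ m r c, ContDiff ℝ (⊤ : ℕ∞) fun t => D m t r c) ∧
        (D (2 * k) = if j = k then M k k else fun _ => 0) ∧
        ∀ g : ℝ → Fin n → ℝ, ContDiff ℝ (⊤ : ℕ∞) g → ∀ t,
          iteratedDeriv j (pMom n k M g j) t
            = ∑ m ∈ Finset.range (2 * k + 1), D m t *ᵥ iteratedDeriv m g t) := by
    intro j
    by_cases hj : j ≤ k
    · obtain ⟨D, h1, h2, h3⟩ := pMom_data k hk M hM j hj
      exact ⟨D, fun _ => ⟨h1, h2, h3⟩⟩
    · exact ⟨fun _ _ => 0, fun h => absurd h hj⟩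
  choose D hD using hP
  refine ⟨fun m t => ∑ j ∈ Finset.range (k + 1), ((-1 : ℝ) ^ j) • D j m t, ?_, ?_⟩
  · intro m r c
    have e : (fun t => (∑ j ∈ Finset.range (k + 1), ((-1 : ℝ) ^ j) • D j m t) r c)
        = fun t => ∑ j ∈ Finset.range (k + 1), ((-1 : ℝ) ^ j) * D j m t r c := by
      funext t; simp [Matrix.sum_apply, Matrix.smul_apply, smul_eq_mul]
    rw [e]
    exact ContDiff.sum fun j hj => contDiff_const.mul
      ((hD j (Nat.lt_succ_iff.mp (Finset.mem_range.mp hj))).1 m r c)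
  · intro g hg t
    calc ∑ j ∈ Finset.range (k + 1), ((-1 : ℝ) ^ j) • iteratedDeriv j (pMom n k M g j) t
        = ∑ j ∈ Finset.range (k + 1), ∑ m ∈ Finset.range (2 * k + 1),
            ((-1 : ℝ) ^ j) • (D j m t *ᵥ iteratedDeriv m g t) := by
          refine Finset.sum_congr rfl fun j hj => ?_
          rw [(hD j (Nat.lt_succ_iff.mp (Finset.mem_range.mp hj))).2.2 g hg t, Finset.smul_sum]
      _ = ∑ m ∈ Finset.range (2 * k + 1), ∑ j ∈ Finset.range (k + 1),
            ((-1 : ℝ) ^ j) • (D j m t *ᵥ iteratedDeriv m g t) := Finset.sum_comm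
      _ = ∑ m ∈ Finset.range (2 * k + 1),
            (∑ j ∈ Finset.range (k + 1), ((-1 : ℝ) ^ j) • D j m t) *ᵥ
              iteratedDeriv m g t := by
          refine Finset.sum_congr rfl fun m _ => ?_
          rw [matrix_sum_mulVec]
          exact Finset.sum_congr rfl fun j _ => (Matrix.smul_mulVec _ _ _).symm
      _ = ((-1 : ℝ) ^ k) • (M k k t *ᵥ iteratedDeriv (2 * k) g t)
            + ∑ m ∈ Finset.range (2 * k),
              (∑ j ∈ Finset.range (k + 1), ((-1 : ℝ) ^ j) • D j m t) *ᵥ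
                iteratedDeriv m g t := by
          rw [Finset.sum_range_succ, add_comm]
          congr 1
          have etop : ∑ j ∈ Finset.range (k + 1), ((-1 : ℝ) ^ j) • D j (2 * k) t
              = ((-1 : ℝ) ^ k) • M k k t := by
            rw [Finset.sum_eq_single_of_mem k (Finset.self_mem_range_succ k)]
            · have := (hD k le_rfl).2.1
              rw [if_pos rfl] at this
              rw [congrFun this t]
            · intro j hj hjk
              have := (hD j (Nat.lt_succ_iff.mp (Finset.mem_range.mp hj))).2.1
              rw [if_neg hjk] at this
              rw [congrFun this t, smul_zero]
          rw [etop, Matrix.smul_mulVec]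

lemma matrix_mulVec_sum {ι : Type*} (s : Finset ι) (A : Matrix (Fin n) (Fin n) ℝ)
    (v : ι → Fin n → ℝ) : A *ᵥ (∑ l ∈ s, v l) = ∑ l ∈ s, A *ᵥ v l := by
  classical
  induction s using Finset.induction with
  | empty => simp [Matrix.mulVec_zero]
  | insert _ _ h ih => rw [Finset.sum_insert h, Finset.sum_insert h, Matrix.mulVec_add, ih]

lemma jacobi_unique (k : ℕ) (hk : 1 ≤ k) (a b : ℝ) (hab : a < b)
    (M : ℕ → ℕ → ℝ → Matrix (Fin n) (Fin n) ℝ)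
    (hM : ∀ i j r c, ContDiff ℝ (⊤ : ℕ∞) fun t => M i j t r c)
    (hMpos : ∀ t ∈ Set.Icc a b, (M k k t).PosDef)
    (g : ℝ → Fin n → ℝ) (hg : ContDiff ℝ (⊤ : ℕ∞) g)
    (hsol : ∀ t ∈ Set.Icc a b,
      ∑ j ∈ Finset.range (k + 1), ((-1 : ℝ) ^ j) • iteratedDeriv j (pMom n k M g j) t = 0)
    (hvan : ∀ m < 2 * k, iteratedDeriv m g a = 0) :
    ∀ t ∈ Set.Icc a b, g t = 0 := by
  classical
  obtain ⟨A, hAs, hA⟩ := jacobi_structure k hk M hM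
  set N : ℕ → ℝ → Matrix (Fin n) (Fin n) ℝ :=
    fun m t => (M k k t)⁻¹ * (((-1 : ℝ) ^ (k + 1)) • A m t) with hN
  have hdet0 : ∀ t ∈ Set.Icc a b, (M k k t).det ≠ 0 := fun t ht => (hMpos t ht).det_pos.ne'
  have hrel : ∀ t ∈ Set.Icc a b, iteratedDeriv (2 * k) g t
      = ∑ m ∈ Finset.range (2 * k), N m t *ᵥ iteratedDeriv m g t := by
    intro t ht
    have h0 := hsol t ht
    rw [hA g hg t] at h0
    rw [add_eq_zero_iff_eq_neg] at h0
    have h2 : M k k t *ᵥ iteratedDeriv (2 * k) g t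
        = ((-1 : ℝ) ^ (k + 1)) • ∑ m ∈ Finset.range (2 * k), A m t *ᵥ iteratedDeriv m g t := by
      have h2' := congrArg (fun v => ((-1 : ℝ) ^ k) • v) h0
      simp only [smul_smul, ← pow_add] at h2'
      rw [Even.neg_one_pow ⟨k, (two_mul k).symm ▸ (two_mul k)⟩, one_smul] at h2'
      rw [h2', smul_neg, pow_succ, mul_neg_one, neg_smul]
    have hinv : (M k k t)⁻¹ * M k k t = 1 :=
      Matrix.nonsing_inv_mul _ (isUnit_iff_ne_zero.mpr (hdet0 t ht))
    calc iteratedDeriv (2 * k) g t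
        = ((M k k t)⁻¹ * M k k t) *ᵥ iteratedDeriv (2 * k) g t := by
          rw [hinv, Matrix.one_mulVec]
      _ = (M k k t)⁻¹ *ᵥ (M k k t *ᵥ iteratedDeriv (2 * k) g t) := by
          rw [Matrix.mulVec_mulVec]
      _ = (M k k t)⁻¹ *ᵥ (((-1 : ℝ) ^ (k + 1)) •
            ∑ m ∈ Finset.range (2 * k), A m t *ᵥ iteratedDeriv m g t) := by rw [h2]
      _ = ((-1 : ℝ) ^ (k + 1)) • ((M k k t)⁻¹ *ᵥ
            ∑ m ∈ Finset.range (2 * k), A m t *ᵥ iteratedDeriv m g t) :=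
          Matrix.mulVec_smul _ _ _
      _ = ((-1 : ℝ) ^ (k + 1)) • ∑ m ∈ Finset.range (2 * k),
            (M k k t)⁻¹ *ᵥ (A m t *ᵥ iteratedDeriv m g t) := by rw [matrix_mulVec_sum]
      _ = ∑ m ∈ Finset.range (2 * k), N m t *ᵥ iteratedDeriv m g t := by
          rw [Finset.smul_sum]
          refine Finset.sum_congr rfl fun m _ => ?_
          simp only [hN]
          rw [← Matrix.mulVec_mulVec, Matrix.smul_mulVec, Matrix.mulVec_smul]
  -- continuity of the entries of `N` on `[a, b]`
  have hMc : Continuous fun t => M k k t :=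
    continuous_matrix fun r c => (hM k k r c).continuous
  have hinvcont : ContinuousOn (fun t => (M k k t)⁻¹) (Set.Icc a b) := by
    have h1 : ContinuousOn (fun t => ((M k k t).det)⁻¹ • (M k k t).adjugate) (Set.Icc a b) :=
      ContinuousOn.smul ((hMc.matrix_det.continuousOn).inv₀ hdet0)
        hMc.matrix_adjugate.continuousOn
    refine h1.congr fun t ht => ?_
    rw [Matrix.inv_def, Ring.inverse_eq_inv]
  have hNentry : ∀ m r c, ContinuousOn (fun t => N m t r c) (Set.Icc a b) := by
    intro m r c
    have e : (fun t => N m t r c)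
        = fun t => ∑ c', (M k k t)⁻¹ r c' * (((-1 : ℝ) ^ (k + 1)) * A m t c' c) := by
      funext t
      simp only [hN, Matrix.mul_apply, Matrix.smul_apply, smul_eq_mul]
    rw [e]
    refine continuousOn_finset_sum _ fun c' _ => ContinuousOn.mul ?_ ?_
    · exact ((continuous_apply c').comp (continuous_apply r)).comp_continuousOn hinvcont
    · exact (continuous_const.mul ((hAs m c' c).continuous)).continuousOn
  -- a uniform bound for each coefficient matrix
  have hbound : ∀ m, ∃ C, 0 ≤ C ∧ ∀ t ∈ Set.Icc a b, ∀ v : Fin n → ℝ,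
      ‖N m t *ᵥ v‖ ≤ C * ‖v‖ := by
    intro m
    have hcont : ContinuousOn (fun t => (fun rc : Fin n × Fin n => N m t rc.1 rc.2))
        (Set.Icc a b) := continuousOn_pi.mpr fun rc => hNentry m rc.1 rc.2
    obtain ⟨C0, hC0⟩ := (isCompact_Icc).exists_bound_of_continuousOn hcont
    refine ⟨(n : ℝ) * max C0 0, by positivity, fun t ht v => ?_⟩
    have hentry : ∀ r c, |N m t r c| ≤ max C0 0 := by
      intro r c
      have h1 := norm_le_pi_norm (fun rc : Fin n × Fin n => N m t rc.1 rc.2) (r, c)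
      have h2 := hC0 t ht
      exact le_trans (le_trans (by simpa using h1) h2) (le_max_left _ _)
    refine (pi_norm_le_iff_of_nonneg (by positivity)).2 fun r => ?_
    calc ‖(N m t *ᵥ v) r‖ = |∑ c, N m t r c * v c| := by
          simp [Matrix.mulVec, dotProduct, Real.norm_eq_abs]
      _ ≤ ∑ c, |N m t r c * v c| := Finset.abs_sum_le_sum_abs _ _
      _ ≤ ∑ _c : Fin n, max C0 0 * ‖v‖ := by
          refine Finset.sum_le_sum fun c _ => ?_
          rw [abs_mul]
          exact mul_le_mul (hentry r c)
            (by rw [← Real.norm_eq_abs]; exact norm_le_pi_norm v c)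
            (abs_nonneg _) (le_max_right _ _)
      _ = (n : ℝ) * max C0 0 * ‖v‖ := by
          rw [Finset.sum_const, Finset.card_univ, Fintype.card_fin, nsmul_eq_mul, mul_assoc]
  choose C hC using hbound
  set K := 1 + ∑ m ∈ Finset.range (2 * k), C m with hK
  have hCsum : 0 ≤ ∑ m ∈ Finset.range (2 * k), C m :=
    Finset.sum_nonneg fun m _ => (hC m).1
  have hK1 : 1 ≤ K := by simp only [hK]; linarith
  have h2k : 0 < 2 * k := by omega
  set y : ℝ → (Fin (2 * k) → Fin n → ℝ) := fun t m => iteratedDeriv (m : ℕ) g t with hy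
  have hycont : Continuous y :=
    continuous_pi fun m => (contDiff_top_iteratedDeriv hg (m : ℕ)).continuous
  have hyderiv : ∀ t, HasDerivAt y (fun m : Fin (2 * k) => iteratedDeriv ((m : ℕ) + 1) g t) t := by
    intro t
    rw [hasDerivAt_pi]
    intro m
    have hd : DifferentiableAt ℝ (iteratedDeriv (m : ℕ) g) t :=
      ((contDiff_top_iteratedDeriv hg (m : ℕ)).differentiable (by simp)) t
    have h1 := hd.hasDerivAt
    show HasDerivAt (fun t => iteratedDeriv (m : ℕ) g t) (iteratedDeriv ((m : ℕ) + 1) g t) t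
    rw [iteratedDeriv_succ]
    exact h1
  have hbound' : ∀ t ∈ Set.Ico a b,
      ‖(fun m : Fin (2 * k) => iteratedDeriv ((m : ℕ) + 1) g t)‖ ≤ K * ‖y t‖ + 0 := by
    intro t ht
    rw [add_zero]
    have hyt : 0 ≤ ‖y t‖ := norm_nonneg _
    have hKy : 0 ≤ K * ‖y t‖ := mul_nonneg (by linarith) hyt
    refine (pi_norm_le_iff_of_nonneg hKy).2 fun m => ?_
    show ‖iteratedDeriv ((m : ℕ) + 1) g t‖ ≤ K * ‖y t‖
    rcases lt_or_eq_of_le (Nat.succ_le_of_lt m.isLt) with hlt | heq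
    · have e : iteratedDeriv ((m : ℕ) + 1) g t = y t ⟨(m : ℕ) + 1, hlt⟩ := rfl
      rw [e]
      calc ‖y t ⟨(m : ℕ) + 1, hlt⟩‖ ≤ ‖y t‖ := norm_le_pi_norm _ _
        _ ≤ K * ‖y t‖ := le_mul_of_one_le_left hyt hK1
    · rw [show (m : ℕ) + 1 = 2 * k from heq]
      rw [hrel t (Set.Ico_subset_Icc_self ht)]
      calc ‖∑ m' ∈ Finset.range (2 * k), N m' t *ᵥ iteratedDeriv m' g t‖
          ≤ ∑ m' ∈ Finset.range (2 * k), ‖N m' t *ᵥ iteratedDeriv m' g t‖ := norm_sum_le _ _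
        _ ≤ ∑ m' ∈ Finset.range (2 * k), C m' * ‖y t‖ := by
            refine Finset.sum_le_sum fun m' hm' => ?_
            have h1 := (hC m').2 t (Set.Ico_subset_Icc_self ht) (iteratedDeriv m' g t)
            refine h1.trans (mul_le_mul_of_nonneg_left ?_ (hC m').1)
            have e : iteratedDeriv m' g t = y t ⟨m', Finset.mem_range.mp hm'⟩ := rfl
            rw [e]
            exact norm_le_pi_norm _ _
        _ = (∑ m' ∈ Finset.range (2 * k), C m') * ‖y t‖ := by rw [Finset.sum_mul]
        _ ≤ K * ‖y t‖ := by
            refine mul_le_mul_of_nonneg_right ?_ hyt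
            simp only [hK]; linarith
  have hya : ‖y a‖ ≤ 0 := by
    have e : y a = 0 := funext fun m => hvan (m : ℕ) m.isLt
    simp [e]
  have hgron := norm_le_gronwallBound_of_norm_deriv_right_le hycont.continuousOn
    (fun t _ => (hyderiv t).hasDerivWithinAt) hya hbound'
  intro t ht
  have h0 := hgron t ht
  rw [gronwallBound_ε0, zero_mul] at h0
  have hy0 : y t = 0 := norm_le_zero_iff.mp h0
  have e : g t = y t ⟨0, h2k⟩ := rfl
  rw [e, hy0]
  rfl

variable {ι : Type*} [Fintype ι]

lemma combo_smooth (c : ι → ℝ) (f : ι → ℝ → Fin n → ℝ) (hf : ∀ i, ContDiff ℝ (⊤ : ℕ∞) (f i)) :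
    ContDiff ℝ (⊤ : ℕ∞) fun s => ∑ i, c i • f i s :=
  ContDiff.sum fun i _ => (hf i).const_smul (c i)

lemma iteratedDeriv_combo (c : ι → ℝ) (f : ι → ℝ → Fin n → ℝ)
    (hf : ∀ i, ContDiff ℝ (⊤ : ℕ∞) (f i)) (m : ℕ) (t : ℝ) :
    iteratedDeriv m (fun s => ∑ i, c i • f i s) t = ∑ i, c i • iteratedDeriv m (f i) t := by
  induction m generalizing t with
  | zero => simp
  | succ m ih =>
    rw [iteratedDeriv_succ]
    have hfun : iteratedDeriv m (fun s => ∑ i, c i • f i s)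
        = fun s => ∑ i, c i • iteratedDeriv m (f i) s := funext fun s => ih s
    rw [hfun]
    have hterm : ∀ i ∈ (Finset.univ : Finset ι),
        HasDerivAt (fun s => c i • iteratedDeriv m (f i) s)
          (c i • iteratedDeriv (m + 1) (f i) t) t := by
      intro i _
      have hd : DifferentiableAt ℝ (iteratedDeriv m (f i)) t :=
        ((contDiff_top_iteratedDeriv (hf i) m).differentiable (by simp)) t
      have h1 := hd.hasDerivAt.const_smul (c i)
      rw [iteratedDeriv_succ]
      exact h1
    exact (HasDerivAt.fun_sum hterm).deriv

lemma pMom_smooth (k : ℕ) (M : ℕ → ℕ → ℝ → Matrix (Fin n) (Fin n) ℝ)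
    (hM : ∀ i j r c, ContDiff ℝ (⊤ : ℕ∞) fun t => M i j t r c)
    (h : ℝ → Fin n → ℝ) (hh : ContDiff ℝ (⊤ : ℕ∞) h) (j : ℕ) :
    ContDiff ℝ (⊤ : ℕ∞) (pMom n k M h j) := by
  rcases eq_or_ne j 0 with rfl | hj0
  · have e : pMom n k M h 0 = fun t =>
        (fun u => M 0 0 u *ᵥ h u) t + (fun u => M 0 1 u *ᵥ iteratedDeriv 1 h u) t := by
      funext t; simp [pMom]
    rw [e]
    exact (contDiff_mulVec (hM 0 0) hh).add
      (contDiff_mulVec (hM 0 1) (contDiff_top_iteratedDeriv hh 1))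
  · rcases eq_or_ne j k with rfl | hjk
    · have e : pMom n j M h j = fun t =>
          (fun u => M j j u *ᵥ iteratedDeriv j h u) t
            + (fun u => (M (j - 1) j u)ᵀ *ᵥ iteratedDeriv (j - 1) h u) t := by
        funext t; simp [pMom, hj0]
      rw [e]
      exact (contDiff_mulVec (hM j j) (contDiff_top_iteratedDeriv hh j)).add
        (contDiff_mulVec (B := fun t => (M (j - 1) j t)ᵀ) (fun r c => hM (j - 1) j c r)
          (contDiff_top_iteratedDeriv hh (j - 1)))
    · have e : pMom n k M h j = fun t =>
          ((fun u => M j j u *ᵥ iteratedDeriv j h u) t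
            + (fun u => (M (j - 1) j u)ᵀ *ᵥ iteratedDeriv (j - 1) h u) t)
            + (fun u => M j (j + 1) u *ᵥ iteratedDeriv (j + 1) h u) t := by
        funext t; simp [pMom, hj0, hjk]
      rw [e]
      exact ((contDiff_mulVec (hM j j) (contDiff_top_iteratedDeriv hh j)).add
        (contDiff_mulVec (B := fun t => (M (j - 1) j t)ᵀ) (fun r c => hM (j - 1) j c r)
          (contDiff_top_iteratedDeriv hh (j - 1)))).add
        (contDiff_mulVec (hM j (j + 1)) (contDiff_top_iteratedDeriv hh (j + 1)))

lemma pMom_combo (k : ℕ) (M : ℕ → ℕ → ℝ → Matrix (Fin n) (Fin n) ℝ)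
    (c : ι → ℝ) (f : ι → ℝ → Fin n → ℝ) (hf : ∀ i, ContDiff ℝ (⊤ : ℕ∞) (f i)) (j : ℕ) :
    pMom n k M (fun s => ∑ i, c i • f i s) j = fun t => ∑ i, c i • pMom n k M (f i) j t := by
  funext t
  have hid : ∀ m, iteratedDeriv m (fun s => ∑ i, c i • f i s) t
      = ∑ i, c i • iteratedDeriv m (f i) t := fun m => iteratedDeriv_combo c f hf m t
  have hmv : ∀ (B : Matrix (Fin n) (Fin n) ℝ) (m : ℕ),
      B *ᵥ iteratedDeriv m (fun s => ∑ i, c i • f i s) t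
        = ∑ i, c i • (B *ᵥ iteratedDeriv m (f i) t) := by
    intro B m
    rw [hid m, matrix_mulVec_sum]
    exact Finset.sum_congr rfl fun i _ => Matrix.mulVec_smul _ _ _
  rcases eq_or_ne j 0 with rfl | hj0
  · show M 0 0 t *ᵥ (∑ i, c i • f i t) + M 0 1 t *ᵥ iteratedDeriv 1 _ t = _
    have h00 : M 0 0 t *ᵥ (∑ i, c i • f i t) = ∑ i, c i • (M 0 0 t *ᵥ f i t) := by
      rw [matrix_mulVec_sum]
      exact Finset.sum_congr rfl fun i _ => Matrix.mulVec_smul _ _ _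
    rw [h00, hmv (M 0 1 t) 1, ← Finset.sum_add_distrib]
    refine Finset.sum_congr rfl fun i _ => ?_
    simp [pMom, smul_add]
  · rcases eq_or_ne j k with rfl | hjk
    · have ep : pMom n j M (fun s => ∑ i, c i • f i s) j t
          = M j j t *ᵥ iteratedDeriv j (fun s => ∑ i, c i • f i s) t
            + (M (j - 1) j t)ᵀ *ᵥ iteratedDeriv (j - 1) (fun s => ∑ i, c i • f i s) t := by
        simp [pMom, hj0]
      rw [ep, hmv (M j j t) j, hmv ((M (j - 1) j t)ᵀ) (j - 1), ← Finset.sum_add_distrib]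
      refine Finset.sum_congr rfl fun i _ => ?_
      simp [pMom, hj0, smul_add]
    · have ep : pMom n k M (fun s => ∑ i, c i • f i s) j t
          = (M j j t *ᵥ iteratedDeriv j (fun s => ∑ i, c i • f i s) t
            + (M (j - 1) j t)ᵀ *ᵥ iteratedDeriv (j - 1) (fun s => ∑ i, c i • f i s) t)
            + M j (j + 1) t *ᵥ iteratedDeriv (j + 1) (fun s => ∑ i, c i • f i s) t := by
        simp [pMom, hj0, hjk]
      rw [ep, hmv (M j j t) j, hmv ((M (j - 1) j t)ᵀ) (j - 1), hmv (M j (j + 1) t) (j + 1),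
        ← Finset.sum_add_distrib, ← Finset.sum_add_distrib]
      refine Finset.sum_congr rfl fun i _ => ?_
      simp [pMom, hj0, hjk, smul_add]

lemma combo_solution (k : ℕ) (a b : ℝ) (M : ℕ → ℕ → ℝ → Matrix (Fin n) (Fin n) ℝ)
    (hM : ∀ i j r c, ContDiff ℝ (⊤ : ℕ∞) fun t => M i j t r c)
    (c : ι → ℝ) (f : ι → ℝ → Fin n → ℝ)
    (hf : ∀ i, IsJacobiSolution n k M a b (f i)) :
    IsJacobiSolution n k M a b (fun s => ∑ i, c i • f i s) := by
  refine ⟨combo_smooth c f fun i => (hf i).1, fun t ht => ?_⟩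
  have e : ∀ j, iteratedDeriv j (pMom n k M (fun s => ∑ i, c i • f i s) j) t
      = ∑ i, c i • iteratedDeriv j (pMom n k M (f i) j) t := by
    intro j
    rw [pMom_combo k M c f (fun i => (hf i).1) j]
    exact iteratedDeriv_combo c (fun i => pMom n k M (f i) j)
      (fun i => pMom_smooth k M hM (f i) (hf i).1 j) j t
  calc ∑ j ∈ Finset.range (k + 1), ((-1 : ℝ) ^ j) •
        iteratedDeriv j (pMom n k M (fun s => ∑ i, c i • f i s) j) t
      = ∑ j ∈ Finset.range (k + 1), ∑ i, c i •
          (((-1 : ℝ) ^ j) • iteratedDeriv j (pMom n k M (f i) j) t) := by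
        refine Finset.sum_congr rfl fun j _ => ?_
        rw [e j, Finset.smul_sum]
        exact Finset.sum_congr rfl fun i _ => smul_comm _ _ _
    _ = ∑ i, c i • ∑ j ∈ Finset.range (k + 1),
          ((-1 : ℝ) ^ j) • iteratedDeriv j (pMom n k M (f i) j) t := by
        rw [Finset.sum_comm]
        exact Finset.sum_congr rfl fun i _ => (Finset.smul_sum).symm
    _ = 0 := by
        rw [Finset.sum_eq_zero]
        intro i _
        rw [(hf i).2 t ht, smul_zero]

lemma iteratedDeriv_zero_of_eqOn {g : ℝ → Fin n → ℝ} (hg : ContDiff ℝ (⊤ : ℕ∞) g) {a b : ℝ}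
    (hab : a < b) (h0 : ∀ t ∈ Set.Icc a b, g t = 0) :
    ∀ m, ∀ t ∈ Set.Icc a b, iteratedDeriv m g t = 0 := by
  intro m
  induction m with
  | zero => simpa using h0
  | succ m ih =>
    intro t ht
    set f := iteratedDeriv m g with hf
    have hdiff : Differentiable ℝ f := (contDiff_top_iteratedDeriv hg m).differentiable (by simp)
    have h1 : HasDerivWithinAt f (deriv f t) (Set.Icc a b) t :=
      (hdiff t).hasDerivAt.hasDerivWithinAt
    have h2 : HasDerivWithinAt f 0 (Set.Icc a b) t :=
      (hasDerivWithinAt_const t _ (0 : Fin n → ℝ)).congr (fun y hy => ih y hy) (ih t ht)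
    have hu := uniqueDiffOn_Icc hab t ht
    have e1 := h1.derivWithin hu
    have e2 := h2.derivWithin hu
    rw [iteratedDeriv_succ, ← hf, e1.symm.trans e2]

/-- with `kn` linearly independent solutions of the Jacobi equation
vanishing to order `k−1` at `a`, a point `t* ∈ (a,b]` is a zero of the sub-Wronskian
if and only if there is a not-identically-zero solution `h` of the Jacobi equation with
`h^{(j)}(a) = h^{(j)}(t*) = 0` for `j = 0, …, k−1`. -/
theorem statement_1 (n k : ℕ) (hn : 1 ≤ n) (hk : 1 ≤ k) (a b : ℝ) (hab : a < b)
    (M : ℕ → ℕ → ℝ → Matrix (Fin n) (Fin n) ℝ)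
    (hMsmooth : ∀ i j r c, ContDiff ℝ (⊤ : ℕ∞) fun t => M i j t r c)
    (hMsymm : ∀ i, i ≤ k → ∀ t ∈ Set.Icc a b, (M i i t).IsSymm)
    (hMpos : ∀ t ∈ Set.Icc a b, (M k k t).PosDef)
    (σ : Fin k × Fin n → ℝ → Fin n → ℝ)
    (hσsol : ∀ i, IsJacobiSolution n k M a b (σ i))
    (hσli : LinearIndependent ℝ fun i => (Set.Icc a b).restrict (σ i))
    (hσvan : ∀ i, ∀ j < k, iteratedDeriv j (σ i) a = 0) :
    ∀ tstar ∈ Set.Ioc a b,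
      (Matrix.det (Matrix.of fun i j : Fin k × Fin n =>
          iteratedDeriv (j.1 : ℕ) (σ i) tstar j.2) = 0 ↔
        ∃ h : ℝ → Fin n → ℝ, IsJacobiSolution n k M a b h ∧
          (∃ t ∈ Set.Icc a b, h t ≠ 0) ∧
          (∀ j < k, iteratedDeriv j h a = 0 ∧ iteratedDeriv j h tstar = 0)) := by
  classical
  intro tstar htstar
  have htsIcc : tstar ∈ Set.Icc a b := ⟨le_of_lt htstar.1, htstar.2⟩
  have hσsmooth : ∀ i, ContDiff ℝ (⊤ : ℕ∞) (σ i) := fun i => (hσsol i).1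
  have hvm : ∀ (S : Matrix (Fin k × Fin n) (Fin k × Fin n) ℝ) (c : Fin k × Fin n → ℝ)
      (p : Fin k × Fin n), (c ᵥ* S) p = ∑ i, c i * S i p := by
    intro S c p; simp [Matrix.vecMul, dotProduct]
  have hcombo_zero : ∀ c : Fin k × Fin n → ℝ,
      (∀ t ∈ Set.Icc a b, ∑ i, c i • σ i t = 0) → c = 0 := by
    intro c hz
    have h1 : ∑ i, c i • (Set.Icc a b).restrict (σ i) = 0 := by
      funext t
      simp only [Finset.sum_apply, Pi.smul_apply, Pi.zero_apply, Set.restrict_apply]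
      exact hz t.1 t.2
    have h2 := Fintype.linearIndependent_iff.1 hσli c h1
    funext i; exact h2 i
  constructor
  · intro hdet
    obtain ⟨c, hc0, hcT⟩ := Matrix.exists_vecMul_eq_zero_iff.mpr hdet
    refine ⟨fun s => ∑ i, c i • σ i s, combo_solution k a b M hMsmooth c σ hσsol, ?_, ?_⟩
    · by_contra hno
      push_neg at hno
      exact hc0 (hcombo_zero c hno)
    · intro j hj
      constructor
      · rw [iteratedDeriv_combo c σ hσsmooth j a]
        exact Finset.sum_eq_zero fun i _ => by rw [hσvan i j hj, smul_zero]
      · rw [iteratedDeriv_combo c σ hσsmooth j tstar]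
        funext r
        have h1 := congrFun hcT (⟨⟨j, hj⟩, r⟩)
        rw [hvm] at h1
        simpa [Finset.sum_apply, Pi.smul_apply, smul_eq_mul] using h1
  · rintro ⟨h, hsolh, ⟨t0, ht0, hne⟩, hvanh⟩
    set S : Matrix (Fin k × Fin n) (Fin k × Fin n) ℝ :=
      Matrix.of (fun i p : Fin k × Fin n => iteratedDeriv (k + (p.1 : ℕ)) (σ i) a p.2)
      with hS
    have hSdet : S.det ≠ 0 := by
      intro hS0
      obtain ⟨c, hc0, hcS⟩ := Matrix.exists_vecMul_eq_zero_iff.mpr hS0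
      have hvan2k : ∀ m < 2 * k, iteratedDeriv m (fun s => ∑ i, c i • σ i s) a = 0 := by
        intro m hm
        rw [iteratedDeriv_combo c σ hσsmooth m a]
        rcases lt_or_ge m k with hmk | hmk
        · exact Finset.sum_eq_zero fun i _ => by rw [hσvan i m hmk, smul_zero]
        · funext r
          have hmklt : m - k < k := by omega
          have h1 := congrFun hcS (⟨⟨m - k, hmklt⟩, r⟩)
          rw [hvm] at h1
          have e : ∀ i, S i (⟨⟨m - k, hmklt⟩, r⟩) = iteratedDeriv m (σ i) a r := by
            intro i
            show iteratedDeriv (k + (m - k)) (σ i) a r = iteratedDeriv m (σ i) a r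
            rw [Nat.add_sub_cancel' hmk]
          simp only [e] at h1
          simpa [Finset.sum_apply, Pi.smul_apply, smul_eq_mul] using h1
      have hsolc := combo_solution k a b M hMsmooth c σ hσsol
      have hz := jacobi_unique k hk a b hab M hMsmooth hMpos _ hsolc.1 hsolc.2 hvan2k
      exact hc0 (hcombo_zero c hz)
    set w : Fin k × Fin n → ℝ := fun p => iteratedDeriv (k + (p.1 : ℕ)) h a p.2 with hw
    set c : Fin k × Fin n → ℝ := w ᵥ* S⁻¹ with hc
    have hcS : c ᵥ* S = w := by
      rw [hc, Matrix.vecMul_vecMul,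
        Matrix.nonsing_inv_mul S (isUnit_iff_ne_zero.mpr hSdet), Matrix.vecMul_one]
    set F : Option (Fin k × Fin n) → ℝ → Fin n → ℝ := fun o => Option.elim o h σ with hF
    set d : Option (Fin k × Fin n) → ℝ := fun o => Option.elim o 1 (fun i => -c i) with hd
    have hFsol : ∀ o, IsJacobiSolution n k M a b (F o) := by
      intro o; cases o
      · exact hsolh
      · exact hσsol _
    have hFsmooth : ∀ o, ContDiff ℝ (⊤ : ℕ∞) (F o) := fun o => (hFsol o).1
    have hGsol := combo_solution k a b M hMsmooth d F hFsol
    have hGexp : ∀ m t, iteratedDeriv m (fun s => ∑ o, d o • F o s) t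
        = iteratedDeriv m h t - ∑ i, c i • iteratedDeriv m (σ i) t := by
      intro m t
      rw [iteratedDeriv_combo d F hFsmooth m t, Fintype.sum_option]
      show (1 : ℝ) • iteratedDeriv m h t + ∑ i, (-c i) • iteratedDeriv m (σ i) t = _
      rw [one_smul, sub_eq_add_neg]
      congr 1
      rw [← Finset.sum_neg_distrib]
      exact Finset.sum_congr rfl fun i _ => neg_smul _ _
    have hGvan : ∀ m < 2 * k, iteratedDeriv m (fun s => ∑ o, d o • F o s) a = 0 := by
      intro m hm
      rw [hGexp m a, sub_eq_zero]
      rcases lt_or_ge m k with hmk | hmk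
      · rw [(hvanh m hmk).1]
        exact (Finset.sum_eq_zero fun i _ => by rw [hσvan i m hmk, smul_zero]).symm
      · funext r
        have hmklt : m - k < k := by omega
        have h1 := congrFun hcS (⟨⟨m - k, hmklt⟩, r⟩)
        rw [hvm] at h1
        have e : ∀ i, S i (⟨⟨m - k, hmklt⟩, r⟩) = iteratedDeriv m (σ i) a r := by
          intro i
          show iteratedDeriv (k + (m - k)) (σ i) a r = iteratedDeriv m (σ i) a r
          rw [Nat.add_sub_cancel' hmk]
        have ew : w (⟨⟨m - k, hmklt⟩, r⟩) = iteratedDeriv m h a r := by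
          show iteratedDeriv (k + (m - k)) h a r = iteratedDeriv m h a r
          rw [Nat.add_sub_cancel' hmk]
        simp only [e, ew] at h1
        simpa [Finset.sum_apply, Pi.smul_apply, smul_eq_mul] using h1.symm
    have hGzero := jacobi_unique k hk a b hab M hMsmooth hMpos _ hGsol.1 hGsol.2 hGvan
    have hc0' : c ≠ 0 := by
      intro hcz
      apply hne
      have h1 := hGexp 0 t0
      rw [iteratedDeriv_zero, iteratedDeriv_zero] at h1
      have h2 := hGzero t0 ht0
      rw [h1, sub_eq_zero] at h2
      rw [h2, hcz]
      simp
    have hdervan : ∀ j, (jlt : j < k) → (∑ i, c i • iteratedDeriv j (σ i) tstar) = 0 := by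
      intro j hj
      have hallm := iteratedDeriv_zero_of_eqOn hGsol.1 hab hGzero j tstar htsIcc
      rw [hGexp j tstar, sub_eq_zero] at hallm
      rw [← hallm, (hvanh j hj).2]
    have hcT : c ᵥ* (Matrix.of fun i j : Fin k × Fin n =>
        iteratedDeriv (j.1 : ℕ) (σ i) tstar j.2) = 0 := by
      funext p
      obtain ⟨jj, r⟩ := p
      rw [hvm]
      have h1 := congrFun (hdervan jj jj.isLt) r
      simpa [Finset.sum_apply, Pi.smul_apply, smul_eq_mul] using h1
    exact Matrix.exists_vecMul_eq_zero_iff.mp ⟨c, hc0', hcT⟩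
end

section
/- (Generalized Picone identity) Let Y, Z : I → M_m(ℝ) be differentiable matrix curves satisfying Y' = AY + BZ and Z' = CY − AᵀZ on I, such that Y(t)ᵀZ(t) − Z(t)ᵀY(t) = 0 for all t and Y(t) is invertible for all t ∈ I. Let y, z : I → ℝ^m be curves with y differentiable, z continuous, satisfying y' = Ay + Bz on I. Then for every t ∈ I: (d/dt)(y(t)ᵀ Z(t) Y(t)⁻¹ y(t)) = z(t)ᵀ B(t) z(t) + y(t)ᵀ C(t) y(t) − (z(t) − Z(t)Y(t)⁻¹y(t))ᵀ B(t) (z(t) − Z(t)Y(t)⁻¹y(t)). -/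
open Matrix

set_option maxHeartbeats 1000000

section aux

attribute [local instance] Matrix.linftyOpNormedRing Matrix.linftyOpNormedAlgebra

variable {m : ℕ}

private noncomputable def eL (m : ℕ) : Matrix (Fin m) (Fin m) ℝ →L[ℝ] (Fin m → Fin m → ℝ) :=
  LinearMap.toContinuousLinearMap
    (LinearMap.id : Matrix (Fin m) (Fin m) ℝ →ₗ[ℝ] (Fin m → Fin m → ℝ))

private noncomputable def eR (m : ℕ) : (Fin m → Fin m → ℝ) →L[ℝ] Matrix (Fin m) (Fin m) ℝ :=
  LinearMap.toContinuousLinearMap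
    (LinearMap.id : (Fin m → Fin m → ℝ) →ₗ[ℝ] Matrix (Fin m) (Fin m) ℝ)

private lemma entry_hasDerivAt {f : ℝ → Matrix (Fin m) (Fin m) ℝ}
    {f' : Matrix (Fin m) (Fin m) ℝ} {t : ℝ} (hf : HasDerivAt f f' t) (i j : Fin m) :
    HasDerivAt (fun s => f s i j) (f' i j) t := by
  have h := (eL m).hasFDerivAt.comp_hasDerivAt t hf
  change HasDerivAt (fun s => eL m (f s)) (eL m f') t at h
  exact hasDerivAt_pi.1 (hasDerivAt_pi.1 h i) j

private lemma matrix_hasDerivAt {f : ℝ → Matrix (Fin m) (Fin m) ℝ}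
    {f' : Matrix (Fin m) (Fin m) ℝ} {t : ℝ}
    (hf : ∀ i j, HasDerivAt (fun s => f s i j) (f' i j) t) :
    HasDerivAt f f' t := by
  have h1 : HasDerivAt (fun s => ∑ i : Fin m, ∑ j : Fin m, f s i j • Matrix.single i j (1 : ℝ))
      (∑ i : Fin m, ∑ j : Fin m, f' i j • Matrix.single i j (1 : ℝ)) t :=
    HasDerivAt.fun_sum fun i _ => HasDerivAt.fun_sum fun j _ => (hf i j).smul_const _
  have key : ∀ M : Matrix (Fin m) (Fin m) ℝ,
      (∑ i : Fin m, ∑ j : Fin m, M i j • Matrix.single i j (1 : ℝ)) = M := by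
    intro M
    simp_rw [Matrix.smul_single, smul_eq_mul, mul_one]
    exact (Matrix.matrix_eq_sum_single M).symm
  have e1 : (fun s => ∑ i : Fin m, ∑ j : Fin m, f s i j • Matrix.single i j (1 : ℝ)) = f := by
    funext s; exact key (f s)
  rw [e1, key f'] at h1
  exact h1

private lemma inv_hasDerivAt {Y : ℝ → Matrix (Fin m) (Fin m) ℝ}
    {Y' : Matrix (Fin m) (Fin m) ℝ} {t : ℝ} (hY : HasDerivAt Y Y' t)
    (h : IsUnit (Y t)) :
    HasDerivAt (fun s => (Y s)⁻¹) (-((Y t)⁻¹ * Y' * (Y t)⁻¹)) t := by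
  have hpt : (h.unit : Matrix (Fin m) (Fin m) ℝ) = Y t := h.unit_spec
  have Hg := hasFDerivAt_ringInverse (𝕜 := ℝ) h.unit
  rw [hpt] at Hg
  have H := Hg.comp_hasDerivAt t hY
  simp only [ContinuousLinearMap.neg_apply, ContinuousLinearMap.mulLeftRight_apply] at H
  have hinv : ((h.unit⁻¹ : _) : Matrix (Fin m) (Fin m) ℝ) = (Y t)⁻¹ := by
    rw [Matrix.nonsing_inv_eq_ringInverse, ← Ring.inverse_unit h.unit, hpt]
  rw [hinv] at H
  have Hfun : (Ring.inverse ∘ Y) = fun s => (Y s)⁻¹ := by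
    funext s; simp [Function.comp, Matrix.nonsing_inv_eq_ringInverse]
  rw [Hfun] at H
  exact H

private lemma picone_W_deriv {Y Z : ℝ → Matrix (Fin m) (Fin m) ℝ}
    {Y' Z' : Matrix (Fin m) (Fin m) ℝ} {t : ℝ}
    (hY : ∀ i j, HasDerivAt (fun s => Y s i j) (Y' i j) t)
    (hZ : ∀ i j, HasDerivAt (fun s => Z s i j) (Z' i j) t)
    (h : IsUnit (Y t).det) :
    ∀ i j, HasDerivAt (fun s => (Z s * (Y s)⁻¹) i j)
      ((Z' * (Y t)⁻¹ - Z t * ((Y t)⁻¹ * Y' * (Y t)⁻¹)) i j) t := by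
  intro i j
  have hu : IsUnit (Y t) := (Matrix.isUnit_iff_isUnit_det _).2 h
  have h1 := (matrix_hasDerivAt hZ).mul (inv_hasDerivAt (matrix_hasDerivAt hY) hu)
  have h2 : Z' * (Y t)⁻¹ + Z t * -((Y t)⁻¹ * Y' * (Y t)⁻¹)
      = Z' * (Y t)⁻¹ - Z t * ((Y t)⁻¹ * Y' * (Y t)⁻¹) := by
    rw [mul_neg, sub_eq_add_neg]
  rw [h2] at h1
  exact entry_hasDerivAt h1 i j

end aux

private lemma dot_symm' {m : ℕ} {M : Matrix (Fin m) (Fin m) ℝ} (hM : Mᵀ = M) (a b : Fin m → ℝ) :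
    a ⬝ᵥ (M *ᵥ b) = (M *ᵥ a) ⬝ᵥ b := by
  calc a ⬝ᵥ (M *ᵥ b) = a ᵥ* M ⬝ᵥ b := Matrix.dotProduct_mulVec _ _ _
    _ = a ᵥ* Mᵀ ⬝ᵥ b := by rw [hM]
    _ = (M *ᵥ a) ⬝ᵥ b := by rw [Matrix.vecMul_transpose]

private lemma dot_transpose' {m : ℕ} (M : Matrix (Fin m) (Fin m) ℝ) (a b : Fin m → ℝ) :
    a ⬝ᵥ (Mᵀ *ᵥ b) = (M *ᵥ a) ⬝ᵥ b := by
  rw [Matrix.dotProduct_mulVec, Matrix.vecMul_transpose]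

/-- Generalized Picone identity: if `Y' = AY + BZ`, `Z' = CY − AᵀZ`,
`YᵀZ − ZᵀY = 0`, `Y(t)` is invertible on `I`, and `y' = Ay + Bz`, then
`(d/dt)(yᵀZY⁻¹y) = zᵀBz + yᵀCy − (z − ZY⁻¹y)ᵀB(z − ZY⁻¹y)` on `I`. -/
theorem statement_4 (m : ℕ) (hm : 1 ≤ m) (I : Set ℝ) (hI : I.OrdConnected)
    (A B C : ℝ → Matrix (Fin m) (Fin m) ℝ)
    (hAc : ContinuousOn A I) (hBc : ContinuousOn B I) (hCc : ContinuousOn C I)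
    (hBsymm : ∀ t ∈ I, (B t)ᵀ = B t) (hCsymm : ∀ t ∈ I, (C t)ᵀ = C t)
    (Y Z : ℝ → Matrix (Fin m) (Fin m) ℝ)
    (hY : ∀ t ∈ I, ∀ i j, HasDerivAt (fun s => Y s i j) ((A t * Y t + B t * Z t) i j) t)
    (hZ : ∀ t ∈ I, ∀ i j, HasDerivAt (fun s => Z s i j) ((C t * Y t - (A t)ᵀ * Z t) i j) t)
    (hsymp : ∀ t ∈ I, (Y t)ᵀ * Z t - (Z t)ᵀ * Y t = 0)
    (hYinv : ∀ t ∈ I, IsUnit (Y t).det)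
    (y z : ℝ → Fin m → ℝ)
    (hy : ∀ t ∈ I, HasDerivAt y (A t *ᵥ y t + B t *ᵥ z t) t)
    (hz : ContinuousOn z I) :
    ∀ t ∈ I,
      HasDerivAt (fun s => y s ⬝ᵥ ((Z s * (Y s)⁻¹) *ᵥ y s))
        (z t ⬝ᵥ (B t *ᵥ z t) + y t ⬝ᵥ (C t *ᵥ y t) -
          (z t - (Z t * (Y t)⁻¹) *ᵥ y t) ⬝ᵥ (B t *ᵥ (z t - (Z t * (Y t)⁻¹) *ᵥ y t))) t := by
  intro t ht
  have hdet := hYinv t ht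
  have hYYi : Y t * (Y t)⁻¹ = 1 := Matrix.mul_nonsing_inv _ hdet
  have hWe := picone_W_deriv (hY t ht) (hZ t ht) hdet
  have hye : ∀ i, HasDerivAt (fun s => y s i) ((A t *ᵥ y t + B t *ᵥ z t) i) t :=
    fun i => hasDerivAt_pi.1 (hy t ht) i
  have hsum : HasDerivAt
      (fun s => ∑ i : Fin m, y s i * ∑ j : Fin m, (Z s * (Y s)⁻¹) i j * y s j)
      (∑ i : Fin m, ((A t *ᵥ y t + B t *ᵥ z t) i * ∑ j : Fin m, (Z t * (Y t)⁻¹) i j * y t j +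
        y t i * ∑ j : Fin m,
          (((C t * Y t - (A t)ᵀ * Z t) * (Y t)⁻¹ -
              Z t * ((Y t)⁻¹ * (A t * Y t + B t * Z t) * (Y t)⁻¹)) i j * y t j +
            (Z t * (Y t)⁻¹) i j * (A t *ᵥ y t + B t *ᵥ z t) j))) t :=
    HasDerivAt.fun_sum fun i _ =>
      (hye i).mul (HasDerivAt.fun_sum fun j _ => (hWe i j).mul (hye j))
  have hfun : (fun s => y s ⬝ᵥ ((Z s * (Y s)⁻¹) *ᵥ y s)) =
      (fun s => ∑ i : Fin m, y s i * ∑ j : Fin m, (Z s * (Y s)⁻¹) i j * y s j) := by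
    funext s
    simp [dotProduct, Matrix.mulVec]
  -- dot-form of the derivative
  have hD : (∑ i : Fin m, ((A t *ᵥ y t + B t *ᵥ z t) i * ∑ j : Fin m, (Z t * (Y t)⁻¹) i j * y t j +
        y t i * ∑ j : Fin m,
          (((C t * Y t - (A t)ᵀ * Z t) * (Y t)⁻¹ -
              Z t * ((Y t)⁻¹ * (A t * Y t + B t * Z t) * (Y t)⁻¹)) i j * y t j +
            (Z t * (Y t)⁻¹) i j * (A t *ᵥ y t + B t *ᵥ z t) j)))
      = (A t *ᵥ y t + B t *ᵥ z t) ⬝ᵥ ((Z t * (Y t)⁻¹) *ᵥ y t) +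
        y t ⬝ᵥ (((C t * Y t - (A t)ᵀ * Z t) * (Y t)⁻¹ -
              Z t * ((Y t)⁻¹ * (A t * Y t + B t * Z t) * (Y t)⁻¹)) *ᵥ y t) +
        y t ⬝ᵥ ((Z t * (Y t)⁻¹) *ᵥ (A t *ᵥ y t + B t *ᵥ z t)) := by
    simp [dotProduct, Matrix.mulVec, Finset.sum_add_distrib, Finset.mul_sum, mul_add]
    abel
  -- simplify W'
  have hW'eq : (C t * Y t - (A t)ᵀ * Z t) * (Y t)⁻¹ -
        Z t * ((Y t)⁻¹ * (A t * Y t + B t * Z t) * (Y t)⁻¹)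
      = C t - (A t)ᵀ * (Z t * (Y t)⁻¹) - (Z t * (Y t)⁻¹) * A t -
        (Z t * (Y t)⁻¹) * B t * (Z t * (Y t)⁻¹) := by
    simp only [Matrix.sub_mul, Matrix.mul_add, Matrix.add_mul, Matrix.mul_assoc, hYYi,
      Matrix.mul_one]
    abel
  -- symmetry of W
  have hs : (Y t)ᵀ * Z t = (Z t)ᵀ * Y t := sub_eq_zero.1 (hsymp t ht)
  have hdt : IsUnit ((Y t)ᵀ).det := by rw [Matrix.det_transpose]; exact hdet
  have h3 : (Z t)ᵀ = (Y t)ᵀ * (Z t * (Y t)⁻¹) := by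
    rw [← Matrix.mul_assoc, hs, Matrix.mul_assoc, hYYi, Matrix.mul_one]
  have hWsymm : (Z t * (Y t)⁻¹)ᵀ = Z t * (Y t)⁻¹ := by
    rw [Matrix.transpose_mul, Matrix.transpose_nonsing_inv, h3, ← Matrix.mul_assoc,
      Matrix.nonsing_inv_mul _ hdt, Matrix.one_mul]
  have hBs := hBsymm t ht
  -- final algebra
  have hval : (A t *ᵥ y t + B t *ᵥ z t) ⬝ᵥ ((Z t * (Y t)⁻¹) *ᵥ y t) +
        y t ⬝ᵥ (((C t * Y t - (A t)ᵀ * Z t) * (Y t)⁻¹ -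
              Z t * ((Y t)⁻¹ * (A t * Y t + B t * Z t) * (Y t)⁻¹)) *ᵥ y t) +
        y t ⬝ᵥ ((Z t * (Y t)⁻¹) *ᵥ (A t *ᵥ y t + B t *ᵥ z t))
      = z t ⬝ᵥ (B t *ᵥ z t) + y t ⬝ᵥ (C t *ᵥ y t) -
          (z t - (Z t * (Y t)⁻¹) *ᵥ y t) ⬝ᵥ (B t *ᵥ (z t - (Z t * (Y t)⁻¹) *ᵥ y t)) := by
    rw [hW'eq]
    simp only [Matrix.sub_mulVec, Matrix.add_mulVec, Matrix.mulVec_add, Matrix.mulVec_sub,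
      dotProduct_add, dotProduct_sub, add_dotProduct,
      sub_dotProduct, ← Matrix.mulVec_mulVec]
    have e1 : y t ⬝ᵥ ((A t)ᵀ *ᵥ ((Z t * (Y t)⁻¹) *ᵥ y t))
        = (A t *ᵥ y t) ⬝ᵥ ((Z t * (Y t)⁻¹) *ᵥ y t) := dot_transpose' _ _ _
    have e2 : y t ⬝ᵥ ((Z t * (Y t)⁻¹) *ᵥ (A t *ᵥ y t))
        = (A t *ᵥ y t) ⬝ᵥ ((Z t * (Y t)⁻¹) *ᵥ y t) := by
      rw [dot_symm' hWsymm, dotProduct_comm]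
    have e4 : y t ⬝ᵥ ((Z t * (Y t)⁻¹) *ᵥ (B t *ᵥ ((Z t * (Y t)⁻¹) *ᵥ y t)))
        = ((Z t * (Y t)⁻¹) *ᵥ y t) ⬝ᵥ (B t *ᵥ ((Z t * (Y t)⁻¹) *ᵥ y t)) :=
      dot_symm' hWsymm _ _
    have e5 : y t ⬝ᵥ ((Z t * (Y t)⁻¹) *ᵥ (B t *ᵥ z t))
        = ((Z t * (Y t)⁻¹) *ᵥ y t) ⬝ᵥ (B t *ᵥ z t) := dot_symm' hWsymm _ _
    have e6 : (B t *ᵥ z t) ⬝ᵥ ((Z t * (Y t)⁻¹) *ᵥ y t)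
        = z t ⬝ᵥ (B t *ᵥ ((Z t * (Y t)⁻¹) *ᵥ y t)) := (dot_symm' hBs _ _).symm
    simp only [← Matrix.mulVec_mulVec] at e1 e2 e4 e5 e6 ⊢
    linarith [e1, e2, e4, e5, e6]
  rw [hfun, ← hval, ← hD]
  exact hsum
end

section
/- Let Y, Z : I → M_m(ℝ) be differentiable matrix curves satisfying Y' = AY + BZ and Z' = CY − AᵀZ on I. If Y(a)ᵀZ(a) − Z(a)ᵀY(a) = 0 for some a ∈ I, then Y(t)ᵀZ(t) − Z(t)ᵀY(t) = 0 for all t ∈ I. -/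
open Matrix

/-- for solutions `Y, Z` of the matrix Hamiltonian system
`Y' = AY + BZ`, `Z' = CY − AᵀZ` on an interval `I`, if `YᵀZ − ZᵀY` vanishes at some
`a ∈ I` then it vanishes identically on `I`. -/
theorem statement_5 (m : ℕ) (hm : 1 ≤ m) (I : Set ℝ) (hI : I.OrdConnected)
    (A B C : ℝ → Matrix (Fin m) (Fin m) ℝ)
    (hAc : ContinuousOn A I) (hBc : ContinuousOn B I) (hCc : ContinuousOn C I)
    (hBsymm : ∀ t ∈ I, (B t)ᵀ = B t) (hCsymm : ∀ t ∈ I, (C t)ᵀ = C t)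
    (Y Z : ℝ → Matrix (Fin m) (Fin m) ℝ)
    (hY : ∀ t ∈ I, ∀ i j, HasDerivAt (fun s => Y s i j) ((A t * Y t + B t * Z t) i j) t)
    (hZ : ∀ t ∈ I, ∀ i j, HasDerivAt (fun s => Z s i j) ((C t * Y t - (A t)ᵀ * Z t) i j) t)
    (a : ℝ) (ha : a ∈ I)
    (hsympa : (Y a)ᵀ * Z a - (Z a)ᵀ * Y a = 0) :
    ∀ t ∈ I, (Y t)ᵀ * Z t - (Z t)ᵀ * Y t = 0 := by
  intro t ht
  ext i j
  -- function f s = ((Y s)ᵀ * Z s - (Z s)ᵀ * Y s) i j has zero derivative on I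
  set f : ℝ → ℝ := fun s => ((Y s)ᵀ * Z s - (Z s)ᵀ * Y s) i j with hf
  have key : ∀ u ∈ I, HasDerivWithinAt f 0 I u := by
    intro u hu
    set Y' := A u * Y u + B u * Z u with hY'
    set Z' := C u * Y u - (A u)ᵀ * Z u with hZ'
    have hmat : Y'ᵀ * Z u + (Y u)ᵀ * Z' - (Z'ᵀ * Y u + (Z u)ᵀ * Y') = 0 := by
      have hB := hBsymm u hu
      have hC := hCsymm u hu
      simp only [hY', hZ', Matrix.transpose_add, Matrix.transpose_sub, Matrix.transpose_mul,
        hB, hC, Matrix.transpose_transpose, Matrix.add_mul, Matrix.sub_mul, Matrix.mul_add, Matrix.mul_sub, Matrix.mul_assoc]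
      abel
    have h1 : HasDerivAt (fun s => ((Y s)ᵀ * Z s) i j)
        ((Y'ᵀ * Z u + (Y u)ᵀ * Z') i j) u := by
      have : HasDerivAt (fun s => ∑ k, Y s k i * Z s k j)
          (∑ k, (Y' k i * Z u k j + Y u k i * Z' k j)) u := by
        exact HasDerivAt.fun_sum fun k _ => (hY u hu k i).mul (hZ u hu k j)
      convert this using 2 <;>
        simp [Matrix.mul_apply, Matrix.transpose_apply, Finset.sum_add_distrib, mul_comm]
    have h2 : HasDerivAt (fun s => ((Z s)ᵀ * Y s) i j)
        ((Z'ᵀ * Y u + (Z u)ᵀ * Y') i j) u := by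
      have : HasDerivAt (fun s => ∑ k, Z s k i * Y s k j)
          (∑ k, (Z' k i * Y u k j + Z u k i * Y' k j)) u := by
        exact HasDerivAt.fun_sum fun k _ => (hZ u hu k i).mul (hY u hu k j)
      convert this using 2 <;>
        simp [Matrix.mul_apply, Matrix.transpose_apply, Finset.sum_add_distrib, mul_comm]
    have h3 := (h1.fun_sub h2)
    have hz : (Y'ᵀ * Z u + (Y u)ᵀ * Z') i j - (Z'ᵀ * Y u + (Z u)ᵀ * Y') i j = 0 := by
      have := congrFun (congrFun hmat i) j
      simpa [Matrix.sub_apply] using this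
    have h4 : HasDerivAt f 0 u := by
      have := h3
      rw [hz] at this
      simpa [hf, Matrix.sub_apply] using this
    exact h4.hasDerivWithinAt
  have hconv : Convex ℝ I := hI.convex
  have := hconv.norm_image_sub_le_of_norm_hasDerivWithin_le
    (f' := fun _ => (0:ℝ)) (fun u hu => key u hu) (C := 0) (fun u hu => by simp) ha ht
  have hfa : f a = 0 := by
    have := congrFun (congrFun hsympa i) j
    simpa [hf, Matrix.sub_apply] using this
  have : f t = f a := by
    have h0 : ‖f t - f a‖ ≤ 0 := by simpa using this
    have := norm_le_zero_iff.mp h0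
    linarith [sub_eq_zero.mp this]
  simp only [hf] at this hfa
  simpa [Matrix.zero_apply] using this.trans hfa
end

section
/- Let Y, Z : I → M_m(ℝ) be differentiable matrix curves satisfying Y' = AY + BZ and Z' = CY − AᵀZ on I, with Y(a)ᵀZ(a) − Z(a)ᵀY(a) = 0 for some a ∈ I. If Y(t) is invertible for all t ∈ I, then the matrix Z(t)Y(t)⁻¹ is symmetric for every t ∈ I. -/
open Matrix

/-- for solutions `Y, Z` of the matrix Hamiltonian system
`Y' = AY + BZ`, `Z' = CY − AᵀZ` on an interval `I` with `Y(a)ᵀZ(a) − Z(a)ᵀY(a) = 0`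
for some `a ∈ I`, if `Y(t)` is invertible for all `t ∈ I` then `Z(t)Y(t)⁻¹` is
symmetric for all `t ∈ I`. -/
theorem statement_6 (m : ℕ) (hm : 1 ≤ m) (I : Set ℝ) (hI : I.OrdConnected)
    (A B C : ℝ → Matrix (Fin m) (Fin m) ℝ)
    (hAc : ContinuousOn A I) (hBc : ContinuousOn B I) (hCc : ContinuousOn C I)
    (hBsymm : ∀ t ∈ I, (B t)ᵀ = B t) (hCsymm : ∀ t ∈ I, (C t)ᵀ = C t)
    (Y Z : ℝ → Matrix (Fin m) (Fin m) ℝ)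
    (hY : ∀ t ∈ I, ∀ i j, HasDerivAt (fun s => Y s i j) ((A t * Y t + B t * Z t) i j) t)
    (hZ : ∀ t ∈ I, ∀ i j, HasDerivAt (fun s => Z s i j) ((C t * Y t - (A t)ᵀ * Z t) i j) t)
    (a : ℝ) (ha : a ∈ I)
    (hsympa : (Y a)ᵀ * Z a - (Z a)ᵀ * Y a = 0)
    (hYinv : ∀ t ∈ I, IsUnit (Y t).det) :
    ∀ t ∈ I, (Z t * (Y t)⁻¹).IsSymm := by
  have hconv : Convex ℝ I := by
    rw [convex_iff_ordConnected]; exact hI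
  -- the key algebraic cancellation
  have key : ∀ t ∈ I,
      ((A t * Y t + B t * Z t)ᵀ * Z t + (Y t)ᵀ * (C t * Y t - (A t)ᵀ * Z t))
        - ((C t * Y t - (A t)ᵀ * Z t)ᵀ * Y t + (Z t)ᵀ * (A t * Y t + B t * Z t)) = 0 := by
    intro t ht
    simp only [transpose_add, transpose_sub, transpose_mul, transpose_transpose,
      hBsymm t ht, hCsymm t ht]
    noncomm_ring
  -- each entry of W = YᵀZ - ZᵀY has zero derivative on I
  have hg : ∀ i j, ∀ t ∈ I,
      HasDerivWithinAt (fun s => ((Y s)ᵀ * Z s - (Z s)ᵀ * Y s) i j) 0 I t := by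
    intro i j t ht
    have hd := HasDerivAt.sub
      (HasDerivAt.sum (fun k (_ : k ∈ Finset.univ) => ((hY t ht k i).mul (hZ t ht k j))))
      (HasDerivAt.sum (fun k (_ : k ∈ Finset.univ) => ((hZ t ht k i).mul (hY t ht k j))))
    have hfun : (fun s => ((Y s)ᵀ * Z s - (Z s)ᵀ * Y s) i j)
        = fun s => (∑ k, Y s k i * Z s k j) - ∑ k, Z s k i * Y s k j := by
      funext s
      simp [Matrix.sub_apply, Matrix.mul_apply, Matrix.transpose_apply]
    have hz : ((∑ k, ((A t * Y t + B t * Z t) k i * Z t k j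
            + Y t k i * (C t * Y t - (A t)ᵀ * Z t) k j))
          - ∑ k, ((C t * Y t - (A t)ᵀ * Z t) k i * Y t k j
            + Z t k i * (A t * Y t + B t * Z t) k j)) = 0 := by
      have h := congrArg (fun M => M i j) (key t ht)
      simp only [Matrix.sub_apply, Matrix.add_apply, Matrix.mul_apply, Matrix.transpose_apply,
        Matrix.zero_apply, Finset.sum_add_distrib, Finset.sum_sub_distrib] at h ⊢
      ring_nf at h ⊢
      exact h
    rw [hfun]
    rw [hz] at hd
    exact (hd.hasDerivWithinAt (s := I)).congr (fun y _ => by simp [Finset.sum_apply])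
      (by simp [Finset.sum_apply])
  -- hence W is constant, so W t = W a = 0
  have hW : ∀ t ∈ I, (Y t)ᵀ * Z t - (Z t)ᵀ * Y t = 0 := by
    intro t ht
    ext i j
    have hb := Convex.norm_image_sub_le_of_norm_hasDerivWithin_le
      (f := fun s => ((Y s)ᵀ * Z s - (Z s)ᵀ * Y s) i j) (f' := fun _ => 0)
      (C := 0) (fun s hs => hg i j s hs) (fun s _ => by simp) hconv ha ht
    have h0 : ((Y a)ᵀ * Z a - (Z a)ᵀ * Y a) i j = 0 := by rw [hsympa]; simp
    have heq : ((Y t)ᵀ * Z t - (Z t)ᵀ * Y t) i j = ((Y a)ᵀ * Z a - (Z a)ᵀ * Y a) i j := by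
      simp only [zero_mul] at hb
      have := le_antisymm hb (norm_nonneg _)
      rwa [norm_eq_zero, sub_eq_zero] at this
    simp [heq, h0]
  intro t ht
  have hsym : (Z t)ᵀ * Y t = (Y t)ᵀ * Z t := by
    have := hW t ht
    linear_combination (norm := noncomm_ring) -this
  have hu := hYinv t ht
  have huT : IsUnit (Y t)ᵀ.det := by rwa [Matrix.det_transpose]
  rw [Matrix.IsSymm, Matrix.transpose_mul, Matrix.transpose_nonsing_inv]
  calc ((Y t)ᵀ)⁻¹ * (Z t)ᵀ
      = ((Y t)ᵀ)⁻¹ * ((Z t)ᵀ * Y t) * (Y t)⁻¹ := by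
        rw [Matrix.mul_assoc ((Y t)ᵀ)⁻¹, Matrix.mul_assoc, Matrix.mul_nonsing_inv _ hu, mul_one]
    _ = ((Y t)ᵀ)⁻¹ * ((Y t)ᵀ * Z t) * (Y t)⁻¹ := by rw [hsym]
    _ = Z t * (Y t)⁻¹ := by
        rw [← Matrix.mul_assoc, Matrix.nonsing_inv_mul _ huT, Matrix.one_mul]
end

section
/- Let Y, Z : [a,b] → M_m(ℝ) be differentiable matrix curves satisfying Y' = AY + BZ and Z' = CY − AᵀZ, with Y(t)ᵀZ(t) − Z(t)ᵀY(t) = 0 and Y(t) invertible for all t ∈ [a,b]. Let y, z : [a,b] → ℝ^m with y continuously differentiable, z continuous, y' = Ay + Bz, and y(a) = y(b) = 0. Then ∫_a^b ( z(t)ᵀ B(t) z(t) + y(t)ᵀ C(t) y(t) ) dt = ∫_a^b (z(t) − Z(t)Y(t)⁻¹y(t))ᵀ B(t) (z(t) − Z(t)Y(t)⁻¹y(t)) dt. -/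
open Matrix

private lemma diffAt_det {m : ℕ} {M : ℝ → Matrix (Fin m) (Fin m) ℝ} {t : ℝ}
    (h : ∀ i j, DifferentiableAt ℝ (fun s => M s i j) t) :
    DifferentiableAt ℝ (fun s => (M s).det) t := by
  simp only [Matrix.det_apply']
  refine DifferentiableAt.fun_sum fun σ _ => DifferentiableAt.const_mul ?_ _
  exact (HasFDerivAt.finset_prod fun i _ => (h (σ i) i).hasFDerivAt).differentiableAt

private lemma dot_swap {m : ℕ} (M : Matrix (Fin m) (Fin m) ℝ) (u v : Fin m → ℝ) :
    u ⬝ᵥ (Mᵀ *ᵥ v) = (M *ᵥ u) ⬝ᵥ v := by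
  rw [Matrix.dotProduct_mulVec, Matrix.vecMul_transpose]

private lemma key_alg {m : ℕ} (Am Bm Cm Wm : Matrix (Fin m) (Fin m) ℝ) (yv zv : Fin m → ℝ)
    (hB : Bmᵀ = Bm) (hW : Wmᵀ = Wm) :
    (Am *ᵥ yv + Bm *ᵥ zv) ⬝ᵥ (Wm *ᵥ yv)
      + yv ⬝ᵥ ((Cm - Amᵀ * Wm - Wm * Am - Wm * Bm * Wm) *ᵥ yv)
      + yv ⬝ᵥ (Wm *ᵥ (Am *ᵥ yv + Bm *ᵥ zv))
    = (zv ⬝ᵥ (Bm *ᵥ zv) + yv ⬝ᵥ (Cm *ᵥ yv))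
      - (zv - Wm *ᵥ yv) ⬝ᵥ (Bm *ᵥ (zv - Wm *ᵥ yv)) := by
  have hdW : ∀ u v : Fin m → ℝ, u ⬝ᵥ (Wm *ᵥ v) = (Wm *ᵥ u) ⬝ᵥ v := fun u v => by
    conv_lhs => rw [← hW]
    exact dot_swap Wm u v
  have hdB : ∀ u v : Fin m → ℝ, u ⬝ᵥ (Bm *ᵥ v) = (Bm *ᵥ u) ⬝ᵥ v := fun u v => by
    conv_lhs => rw [← hB]
    exact dot_swap Bm u v
  have hdA : ∀ u v : Fin m → ℝ, u ⬝ᵥ (Amᵀ *ᵥ v) = (Am *ᵥ u) ⬝ᵥ v := dot_swap Am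
  simp only [Matrix.sub_mulVec, Matrix.mulVec_add, Matrix.mulVec_sub, Matrix.add_mulVec,
    add_dotProduct, dotProduct_add, sub_dotProduct, dotProduct_sub,
    ← Matrix.mulVec_mulVec]
  rw [hdA, hdW yv, hdW yv, hdW yv, hdB zv, hdB zv]
  ring

/-- under the Picone hypotheses on `[a,b]`, with `y(a) = y(b) = 0`,
`∫_a^b (zᵀBz + yᵀCy) dt = ∫_a^b (z − ZY⁻¹y)ᵀ B (z − ZY⁻¹y) dt`. -/
theorem statement_7 (m : ℕ) (hm : 1 ≤ m) (a b : ℝ) (hab : a < b)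
    (A B C : ℝ → Matrix (Fin m) (Fin m) ℝ)
    (hAc : ContinuousOn A (Set.Icc a b)) (hBc : ContinuousOn B (Set.Icc a b))
    (hCc : ContinuousOn C (Set.Icc a b))
    (hBsymm : ∀ t ∈ Set.Icc a b, (B t)ᵀ = B t)
    (hCsymm : ∀ t ∈ Set.Icc a b, (C t)ᵀ = C t)
    (Y Z : ℝ → Matrix (Fin m) (Fin m) ℝ)
    (hY : ∀ t ∈ Set.Icc a b, ∀ i j,
      HasDerivAt (fun s => Y s i j) ((A t * Y t + B t * Z t) i j) t)
    (hZ : ∀ t ∈ Set.Icc a b, ∀ i j,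
      HasDerivAt (fun s => Z s i j) ((C t * Y t - (A t)ᵀ * Z t) i j) t)
    (hsymp : ∀ t ∈ Set.Icc a b, (Y t)ᵀ * Z t - (Z t)ᵀ * Y t = 0)
    (hYinv : ∀ t ∈ Set.Icc a b, IsUnit (Y t).det)
    (y z : ℝ → Fin m → ℝ)
    (hy : ∀ t ∈ Set.Icc a b, HasDerivAt y (A t *ᵥ y t + B t *ᵥ z t) t)
    (hy' : ContinuousOn (deriv y) (Set.Icc a b))
    (hz : ContinuousOn z (Set.Icc a b))
    (hya : y a = 0) (hyb : y b = 0) :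
    (∫ t in a..b, (z t ⬝ᵥ (B t *ᵥ z t) + y t ⬝ᵥ (C t *ᵥ y t))) =
      ∫ t in a..b,
        (z t - (Z t * (Y t)⁻¹) *ᵥ y t) ⬝ᵥ (B t *ᵥ (z t - (Z t * (Y t)⁻¹) *ᵥ y t)) := by
  have hab' : a ≤ b := hab.le
  have hYdiff : ∀ t ∈ Set.Icc a b, ∀ i j, DifferentiableAt ℝ (fun s => Y s i j) t :=
    fun t ht i j => (hY t ht i j).differentiableAt
  have hdet0 : ∀ t ∈ Set.Icc a b, (Y t).det ≠ 0 := fun t ht => (hYinv t ht).ne_zero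
  have hYN : ∀ t ∈ Set.Icc a b, Y t * (Y t)⁻¹ = 1 :=
    fun t ht => Matrix.mul_nonsing_inv _ (hYinv t ht)
  have hNY : ∀ t ∈ Set.Icc a b, (Y t)⁻¹ * Y t = 1 :=
    fun t ht => Matrix.nonsing_inv_mul _ (hYinv t ht)
  -- differentiability of the entries of Y⁻¹
  have hNdiff : ∀ t ∈ Set.Icc a b, ∀ i j, DifferentiableAt ℝ (fun s => (Y s)⁻¹ i j) t := by
    intro t ht i j
    have hdet : DifferentiableAt ℝ (fun s => (Y s).det) t := diffAt_det (hYdiff t ht)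
    have hadj : DifferentiableAt ℝ (fun s => (Y s).adjugate i j) t := by
      simp only [Matrix.adjugate_apply]
      apply diffAt_det
      intro k l
      simp only [Matrix.updateRow_apply]
      by_cases hk : k = j
      · simp only [if_pos hk]; exact differentiableAt_const _
      · simp only [if_neg hk]; exact hYdiff t ht k l
    have heq : (fun s => (Y s)⁻¹ i j) = fun s => ((Y s).det)⁻¹ * (Y s).adjugate i j := by
      funext s
      rw [Matrix.inv_def, Matrix.smul_apply, Ring.inverse_eq_inv, smul_eq_mul]
    rw [heq]
    exact (hdet.inv (hdet0 t ht)).mul hadj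
  -- derivative of the entries of Y⁻¹
  have hNder : ∀ t ∈ Set.Icc a b, ∀ i j,
      HasDerivAt (fun s => (Y s)⁻¹ i j)
        ((-((Y t)⁻¹ * (A t * Y t + B t * Z t) * (Y t)⁻¹)) i j) t := by
    intro t ht
    set n : Matrix (Fin m) (Fin m) ℝ := Matrix.of fun i j => deriv (fun s => (Y s)⁻¹ i j) t
      with hn
    have hnd : ∀ i j, HasDerivAt (fun s => (Y s)⁻¹ i j) (n i j) t := fun i j =>
      (hNdiff t ht i j).hasDerivAt
    have hdetc : ContinuousAt (fun s => (Y s).det) t := (diffAt_det (hYdiff t ht)).continuousAt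
    have hev : ∀ᶠ s in nhds t, Y s * (Y s)⁻¹ = 1 :=
      (hdetc.eventually_ne (hdet0 t ht)).mono fun s hs =>
        Matrix.mul_nonsing_inv _ (isUnit_iff_ne_zero.mpr hs)
    have hzero : ∀ i j, (((A t * Y t + B t * Z t) * (Y t)⁻¹ + Y t * n) i j) = 0 := by
      intro i j
      have hmul : HasDerivAt (fun s => ∑ k, Y s i k * (Y s)⁻¹ k j)
          (((A t * Y t + B t * Z t) * (Y t)⁻¹ + Y t * n) i j) t := by
        have := HasDerivAt.fun_sum (u := Finset.univ)
          (A := fun k s => Y s i k * (Y s)⁻¹ k j)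
          (A' := fun k => (A t * Y t + B t * Z t) i k * (Y t)⁻¹ k j + Y t i k * n k j)
          (fun k _ => (hY t ht i k).mul (hnd k j))
        simpa [Matrix.mul_apply, Matrix.add_apply, Finset.sum_add_distrib] using this
      have h1 : HasDerivAt (fun s => ∑ k, Y s i k * (Y s)⁻¹ k j) 0 t := by
        have hc : HasDerivAt (fun _ : ℝ => (1 : Matrix (Fin m) (Fin m) ℝ) i j) 0 t :=
          hasDerivAt_const _ _
        refine hc.congr_of_eventuallyEq (hev.mono fun s hs => ?_)
        rw [← hs, Matrix.mul_apply]
      exact hmul.unique h1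
    have hmat : (A t * Y t + B t * Z t) * (Y t)⁻¹ + Y t * n = 0 := by
      ext i j; exact hzero i j
    have hYn : Y t * n = -((A t * Y t + B t * Z t) * (Y t)⁻¹) := by
      have := hmat
      rw [add_comm] at this
      exact add_eq_zero_iff_eq_neg.mp this
    have hnval : n = -((Y t)⁻¹ * (A t * Y t + B t * Z t) * (Y t)⁻¹) := by
      calc n = ((Y t)⁻¹ * Y t) * n := by rw [hNY t ht, one_mul]
        _ = (Y t)⁻¹ * (Y t * n) := by rw [Matrix.mul_assoc]
        _ = (Y t)⁻¹ * -((A t * Y t + B t * Z t) * (Y t)⁻¹) := by rw [hYn]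
        _ = -((Y t)⁻¹ * (A t * Y t + B t * Z t) * (Y t)⁻¹) := by
            rw [Matrix.mul_neg, Matrix.mul_assoc]
    intro i j
    have := hnd i j
    rwa [hnval] at this
  -- derivative of the entries of W = Z Y⁻¹
  have hWder : ∀ t ∈ Set.Icc a b, ∀ i j,
      HasDerivAt (fun s => (Z s * (Y s)⁻¹) i j)
        ((C t - (A t)ᵀ * (Z t * (Y t)⁻¹) - (Z t * (Y t)⁻¹) * A t
          - (Z t * (Y t)⁻¹) * B t * (Z t * (Y t)⁻¹)) i j) t := by
    intro t ht i j
    have h1 : HasDerivAt (fun s => ∑ k, Z s i k * (Y s)⁻¹ k j)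
        (((C t * Y t - (A t)ᵀ * Z t) * (Y t)⁻¹
          + Z t * -((Y t)⁻¹ * (A t * Y t + B t * Z t) * (Y t)⁻¹)) i j) t := by
      have := HasDerivAt.fun_sum (u := Finset.univ)
        (A := fun k s => Z s i k * (Y s)⁻¹ k j)
        (A' := fun k => (C t * Y t - (A t)ᵀ * Z t) i k * (Y t)⁻¹ k j
          + Z t i k * (-((Y t)⁻¹ * (A t * Y t + B t * Z t) * (Y t)⁻¹)) k j)
        (fun k _ => (hZ t ht i k).mul (hNder t ht k j))
      simpa [Matrix.mul_apply, Matrix.add_apply, Finset.sum_add_distrib] using this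
    have hiden : (C t * Y t - (A t)ᵀ * Z t) * (Y t)⁻¹
        + Z t * -((Y t)⁻¹ * (A t * Y t + B t * Z t) * (Y t)⁻¹)
      = C t - (A t)ᵀ * (Z t * (Y t)⁻¹) - (Z t * (Y t)⁻¹) * A t
        - (Z t * (Y t)⁻¹) * B t * (Z t * (Y t)⁻¹) := by
      have h := hYN t ht
      calc (C t * Y t - (A t)ᵀ * Z t) * (Y t)⁻¹
            + Z t * -((Y t)⁻¹ * (A t * Y t + B t * Z t) * (Y t)⁻¹)
          = C t * (Y t * (Y t)⁻¹) - (A t)ᵀ * (Z t * (Y t)⁻¹)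
            - (Z t * (Y t)⁻¹) * (A t * (Y t * (Y t)⁻¹))
            - (Z t * (Y t)⁻¹) * (B t * (Z t * (Y t)⁻¹)) := by noncomm_ring
        _ = _ := by rw [h]; noncomm_ring
    have hfun : (fun s => (Z s * (Y s)⁻¹) i j) = fun s => ∑ k, Z s i k * (Y s)⁻¹ k j := by
      funext s; rw [Matrix.mul_apply]
    rw [hfun, ← hiden]
    exact h1
  -- symmetry of W
  have hWsym : ∀ t ∈ Set.Icc a b, (Z t * (Y t)⁻¹)ᵀ = Z t * (Y t)⁻¹ := by
    intro t ht
    have h1 : (Y t)ᵀ * Z t = (Z t)ᵀ * Y t := sub_eq_zero.mp (hsymp t ht)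
    have hT : IsUnit ((Y t)ᵀ).det := by rw [Matrix.det_transpose]; exact hYinv t ht
    rw [Matrix.transpose_mul, Matrix.transpose_nonsing_inv]
    have h2 : (Z t)ᵀ = (Y t)ᵀ * (Z t * (Y t)⁻¹) := by
      have h3 : (Z t)ᵀ * Y t * (Y t)⁻¹ = (Y t)ᵀ * Z t * (Y t)⁻¹ := by rw [h1]
      rw [Matrix.mul_assoc, hYN t ht, mul_one] at h3
      rw [h3, Matrix.mul_assoc]
    rw [h2, ← Matrix.mul_assoc, Matrix.nonsing_inv_mul _ hT, one_mul]
  -- derivative of g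
  have hgder : ∀ t ∈ Set.Icc a b,
      HasDerivAt (fun s => y s ⬝ᵥ ((Z s * (Y s)⁻¹) *ᵥ y s))
        ((z t ⬝ᵥ (B t *ᵥ z t) + y t ⬝ᵥ (C t *ᵥ y t))
          - (z t - (Z t * (Y t)⁻¹) *ᵥ y t) ⬝ᵥ (B t *ᵥ (z t - (Z t * (Y t)⁻¹) *ᵥ y t))) t := by
    intro t ht
    have hyi : ∀ i, HasDerivAt (fun s => y s i) ((A t *ᵥ y t + B t *ᵥ z t) i) t :=
      fun i => hasDerivAt_pi.mp (hy t ht) i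
    have hraw : HasDerivAt (fun s => ∑ i, y s i * ∑ j, (Z s * (Y s)⁻¹) i j * y s j)
        (∑ i, ((A t *ᵥ y t + B t *ᵥ z t) i * ∑ j, (Z t * (Y t)⁻¹) i j * y t j
          + y t i * ∑ j, ((C t - (A t)ᵀ * (Z t * (Y t)⁻¹) - (Z t * (Y t)⁻¹) * A t
              - (Z t * (Y t)⁻¹) * B t * (Z t * (Y t)⁻¹)) i j * y t j
            + (Z t * (Y t)⁻¹) i j * (A t *ᵥ y t + B t *ᵥ z t) j))) t := by
      apply HasDerivAt.fun_sum
      intro i _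
      exact (hyi i).mul (HasDerivAt.fun_sum fun j _ => (hWder t ht i j).mul (hyi j))
    have hfun : (fun s => y s ⬝ᵥ ((Z s * (Y s)⁻¹) *ᵥ y s))
        = fun s => ∑ i, y s i * ∑ j, (Z s * (Y s)⁻¹) i j * y s j := by
      funext s; simp [dotProduct, Matrix.mulVec]
    have hval : (∑ i, ((A t *ᵥ y t + B t *ᵥ z t) i * ∑ j, (Z t * (Y t)⁻¹) i j * y t j
          + y t i * ∑ j, ((C t - (A t)ᵀ * (Z t * (Y t)⁻¹) - (Z t * (Y t)⁻¹) * A t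
              - (Z t * (Y t)⁻¹) * B t * (Z t * (Y t)⁻¹)) i j * y t j
            + (Z t * (Y t)⁻¹) i j * (A t *ᵥ y t + B t *ᵥ z t) j)))
        = (A t *ᵥ y t + B t *ᵥ z t) ⬝ᵥ ((Z t * (Y t)⁻¹) *ᵥ y t)
          + y t ⬝ᵥ ((C t - (A t)ᵀ * (Z t * (Y t)⁻¹) - (Z t * (Y t)⁻¹) * A t
              - (Z t * (Y t)⁻¹) * B t * (Z t * (Y t)⁻¹)) *ᵥ y t)
          + y t ⬝ᵥ ((Z t * (Y t)⁻¹) *ᵥ (A t *ᵥ y t + B t *ᵥ z t)) := by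
      simp [dotProduct, Matrix.mulVec, Finset.sum_add_distrib, mul_add, add_assoc]
    rw [hfun]
    have := hraw
    rw [hval, key_alg (A t) (B t) (C t) (Z t * (Y t)⁻¹) (y t) (z t)
      (hBsymm t ht) (hWsym t ht)] at this
    exact this
  -- continuity facts
  have hyOn : ContinuousOn y (Set.Icc a b) := fun t ht =>
    (hy t ht).continuousAt.continuousWithinAt
  have hycont : ∀ i, ContinuousOn (fun t => y t i) (Set.Icc a b) := fun i =>
    (continuous_apply i).comp_continuousOn hyOn
  have hzcont : ∀ i, ContinuousOn (fun t => z t i) (Set.Icc a b) := fun i =>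
    (continuous_apply i).comp_continuousOn hz
  have hWcont : ∀ i j, ContinuousOn (fun t => (Z t * (Y t)⁻¹) i j) (Set.Icc a b) := by
    intro i j
    have : (fun t => (Z t * (Y t)⁻¹) i j) = fun t => ∑ k, Z t i k * (Y t)⁻¹ k j := by
      funext s; rw [Matrix.mul_apply]
    rw [this]
    apply continuousOn_finset_sum
    intro k _
    exact ContinuousOn.mul
      (fun t ht => (hZ t ht i k).differentiableAt.continuousAt.continuousWithinAt)
      (fun t ht => (hNdiff t ht k j).continuousAt.continuousWithinAt)
  -- continuity of a dot product expression
  have hdotc : ∀ (f g : ℝ → Fin m → ℝ) (M : ℝ → Matrix (Fin m) (Fin m) ℝ),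
      (∀ i, ContinuousOn (fun t => f t i) (Set.Icc a b)) →
      (∀ i, ContinuousOn (fun t => g t i) (Set.Icc a b)) →
      (∀ i j, ContinuousOn (fun t => M t i j) (Set.Icc a b)) →
      ContinuousOn (fun t => f t ⬝ᵥ (M t *ᵥ g t)) (Set.Icc a b) := by
    intro f g M hf hg hM
    have : (fun t => f t ⬝ᵥ (M t *ᵥ g t)) = fun t => ∑ i, f t i * ∑ j, M t i j * g t j := by
      funext s; simp [dotProduct, Matrix.mulVec]
    rw [this]
    apply continuousOn_finset_sum
    intro i _
    exact (hf i).mul (continuousOn_finset_sum _ fun j _ => (hM i j).mul (hg j))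
  have hBe : ∀ i j, ContinuousOn (fun t => B t i j) (Set.Icc a b) := fun i j =>
    (continuous_id.matrix_elem i j).comp_continuousOn hBc
  have hCe : ∀ i j, ContinuousOn (fun t => C t i j) (Set.Icc a b) := fun i j =>
    (continuous_id.matrix_elem i j).comp_continuousOn hCc
  have hucont : ∀ i, ContinuousOn (fun t => (z t - (Z t * (Y t)⁻¹) *ᵥ y t) i) (Set.Icc a b) := by
    intro i
    have : (fun t => (z t - (Z t * (Y t)⁻¹) *ᵥ y t) i)
        = fun t => z t i - ∑ j, (Z t * (Y t)⁻¹) i j * y t j := by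
      funext s; simp [Matrix.mulVec, dotProduct]
    rw [this]
    exact (hzcont i).sub (continuousOn_finset_sum _ fun j _ => (hWcont i j).mul (hycont j))
  have hFc : ContinuousOn
      (fun t => z t ⬝ᵥ (B t *ᵥ z t) + y t ⬝ᵥ (C t *ᵥ y t)) (Set.Icc a b) :=
    (hdotc z z B hzcont hzcont hBe).add (hdotc y y C hycont hycont hCe)
  have hGc : ContinuousOn
      (fun t => (z t - (Z t * (Y t)⁻¹) *ᵥ y t) ⬝ᵥ (B t *ᵥ (z t - (Z t * (Y t)⁻¹) *ᵥ y t)))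
      (Set.Icc a b) :=
    hdotc _ _ B hucont hucont hBe
  -- fundamental theorem of calculus
  have huIcc : Set.uIcc a b = Set.Icc a b := Set.uIcc_of_le hab'
  have hIF : IntervalIntegrable
      (fun t => z t ⬝ᵥ (B t *ᵥ z t) + y t ⬝ᵥ (C t *ᵥ y t)) MeasureTheory.volume a b := by
    apply ContinuousOn.intervalIntegrable; rwa [huIcc]
  have hIG : IntervalIntegrable
      (fun t => (z t - (Z t * (Y t)⁻¹) *ᵥ y t) ⬝ᵥ (B t *ᵥ (z t - (Z t * (Y t)⁻¹) *ᵥ y t)))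
      MeasureTheory.volume a b := by
    apply ContinuousOn.intervalIntegrable; rwa [huIcc]
  have hftc : ∫ t in a..b,
        ((z t ⬝ᵥ (B t *ᵥ z t) + y t ⬝ᵥ (C t *ᵥ y t))
          - (z t - (Z t * (Y t)⁻¹) *ᵥ y t) ⬝ᵥ (B t *ᵥ (z t - (Z t * (Y t)⁻¹) *ᵥ y t)))
      = (y b ⬝ᵥ ((Z b * (Y b)⁻¹) *ᵥ y b)) - (y a ⬝ᵥ ((Z a * (Y a)⁻¹) *ᵥ y a)) := by
    apply intervalIntegral.integral_eq_sub_of_hasDerivAt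
    · intro t ht
      exact hgder t (huIcc ▸ ht)
    · apply ContinuousOn.intervalIntegrable
      rw [huIcc]
      exact hFc.sub hGc
  rw [intervalIntegral.integral_sub hIF hIG] at hftc
  rw [hya, hyb] at hftc
  simp only [zero_dotProduct, sub_zero, zero_dotProduct] at hftc
  linarith [hftc]
end

section
/- Let Y, Z : [a,b] → M_m(ℝ) be differentiable matrix curves satisfying Y' = AY + BZ and Z' = CY − AᵀZ, with Y(t)ᵀZ(t) − Z(t)ᵀY(t) = 0 and Y(t) invertible for all t ∈ [a,b], and assume additionally that B(t) is positive semidefinite for all t. Let y, z : [a,b] → ℝ^m with y continuously differentiable, z continuous, y' = Ay + Bz, and y(a) = y(b) = 0. Then ∫_a^b ( z(t)ᵀ B(t) z(t) + y(t)ᵀ C(t) y(t) ) dt ≥ 0, and the integral is zero only if y ≡ 0 on [a,b]. -/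
open Matrix Set MeasureTheory intervalIntegral

attribute [local instance] Matrix.linftyOpNormedAddCommGroup Matrix.linftyOpNormedRing
  Matrix.linftyOpNormedAlgebra

variable {m : ℕ}

noncomputable def matEquiv (m : ℕ) :
    Matrix (Fin m) (Fin m) ℝ ≃L[ℝ] (Fin m → Fin m → ℝ) :=
  (LinearEquiv.refl ℝ (Fin m → Fin m → ℝ) :
    Matrix (Fin m) (Fin m) ℝ ≃ₗ[ℝ] (Fin m → Fin m → ℝ)).toContinuousLinearEquiv

lemma hasDerivAt_matrix {f : ℝ → Matrix (Fin m) (Fin m) ℝ} {f' : Matrix (Fin m) (Fin m) ℝ}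
    {t : ℝ} : HasDerivAt f f' t ↔ ∀ i j, HasDerivAt (fun s => f s i j) (f' i j) t := by
  constructor
  · intro h i j
    have h2 : HasDerivAt (fun s => (matEquiv m) (f s)) (matEquiv m f') t :=
      ((matEquiv m).toContinuousLinearMap.hasFDerivAt).comp_hasDerivAt t h
    exact hasDerivAt_pi.1 (hasDerivAt_pi.1 h2 i) j
  · intro h
    have h2 : HasDerivAt (fun s => (matEquiv m) (f s)) (matEquiv m f') t :=
      hasDerivAt_pi.2 fun i => hasDerivAt_pi.2 fun j => h i j
    have h3 : HasDerivAt (fun s => (matEquiv m).symm ((matEquiv m) (f s)))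
        ((matEquiv m).symm (matEquiv m f')) t :=
      ((matEquiv m).symm.toContinuousLinearMap.hasFDerivAt).comp_hasDerivAt t h2
    simpa using h3

lemma hasDerivAt_matrix_inv {f : ℝ → Matrix (Fin m) (Fin m) ℝ} {f' : Matrix (Fin m) (Fin m) ℝ}
    {t : ℝ} (hf : HasDerivAt f f' t) (hu : IsUnit (f t).det) :
    HasDerivAt (fun s => (f s)⁻¹) (-((f t)⁻¹ * f' * (f t)⁻¹)) t := by
  obtain ⟨u, hu'⟩ := (Matrix.isUnit_iff_isUnit_det _).2 hu
  have h1 : HasFDerivAt Ring.inverse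
      (-(ContinuousLinearMap.mulLeftRight ℝ _ ↑u⁻¹ ↑u⁻¹)) (f t) :=
    hu' ▸ hasFDerivAt_ringInverse u
  have h2 := h1.comp_hasDerivAt t hf
  have hfun : (fun s => (f s)⁻¹) = Ring.inverse ∘ f :=
    funext fun s => Matrix.nonsing_inv_eq_ringInverse _
  rw [hfun]
  refine h2.congr_deriv ?_
  have hcoe : (↑u⁻¹ : Matrix (Fin m) (Fin m) ℝ) = (f t)⁻¹ := by
    rw [Matrix.coe_units_inv, hu']
  simp [hcoe, ContinuousLinearMap.mulLeftRight_apply]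

lemma hasDerivAt_quadratic {y y' : ℝ → Fin m → ℝ} {W : ℝ → Matrix (Fin m) (Fin m) ℝ}
    {W' : Matrix (Fin m) (Fin m) ℝ} {yd : Fin m → ℝ} {t : ℝ}
    (hy : HasDerivAt y yd t) (hW : HasDerivAt W W' t) :
    HasDerivAt (fun s => y s ⬝ᵥ (W s *ᵥ y s))
      (yd ⬝ᵥ (W t *ᵥ y t) + y t ⬝ᵥ (W' *ᵥ y t) + y t ⬝ᵥ (W t *ᵥ yd)) t := by
  have hyi : ∀ i, HasDerivAt (fun s => y s i) (yd i) t := fun i => hasDerivAt_pi.1 hy i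
  have hWij : ∀ i j, HasDerivAt (fun s => W s i j) (W' i j) t := hasDerivAt_matrix.1 hW
  have key : HasDerivAt (fun s => y s ⬝ᵥ (W s *ᵥ y s))
      (∑ i, (yd i * ∑ j, W t i j * y t j +
        y t i * ∑ j, (W' i j * y t j + W t i j * yd j))) t := by
    simp only [dotProduct, mulVec]
    exact HasDerivAt.fun_sum fun i _ =>
      (hyi i).mul (HasDerivAt.fun_sum fun j _ => ((hWij i j).mul (hyi j)))
  convert key using 1
  simp only [dotProduct, mulVec, Finset.sum_add_distrib, mul_add, Finset.mul_sum]
  ring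

lemma dp_move (M : Matrix (Fin m) (Fin m) ℝ) (u v : Fin m → ℝ) :
    (M *ᵥ u) ⬝ᵥ v = u ⬝ᵥ (Mᵀ *ᵥ v) := by
  rw [Matrix.mulVec_transpose, dotProduct_comm, dotProduct_mulVec]
  exact dotProduct_comm _ _

lemma picone_algebra (A B C W : Matrix (Fin m) (Fin m) ℝ)
    (hB : Bᵀ = B) (hW : Wᵀ = W) (y z : Fin m → ℝ) :
    (A *ᵥ y + B *ᵥ z) ⬝ᵥ (W *ᵥ y) + y ⬝ᵥ ((C - Aᵀ * W - W * A - W * B * W) *ᵥ y)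
      + y ⬝ᵥ (W *ᵥ (A *ᵥ y + B *ᵥ z))
    = z ⬝ᵥ (B *ᵥ z) + y ⬝ᵥ (C *ᵥ y) - (z - W *ᵥ y) ⬝ᵥ (B *ᵥ (z - W *ᵥ y)) := by
  simp only [Matrix.sub_mulVec, Matrix.add_mulVec, Matrix.mulVec_add, Matrix.mulVec_sub,
    add_dotProduct, dotProduct_add, sub_dotProduct, dotProduct_sub, dp_move,
    Matrix.mulVec_mulVec, Matrix.transpose_mul, Matrix.transpose_transpose, hB, hW, mul_assoc]
  ring

lemma wderiv_eq (A B C Y Z N : Matrix (Fin m) (Fin m) ℝ) (hYN : Y * N = 1) :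
    (C * Y - Aᵀ * Z) * N + Z * (-(N * (A * Y + B * Z) * N)) =
      C - Aᵀ * (Z * N) - (Z * N) * A - (Z * N) * B * (Z * N) := by
  have expand : (C * Y - Aᵀ * Z) * N + Z * (-(N * (A * Y + B * Z) * N)) =
      C * (Y * N) - Aᵀ * (Z * N) - (Z * N) * (A * (Y * N)) - (Z * N) * (B * (Z * N)) := by
    noncomm_ring
  rw [expand, hYN, mul_one, mul_one]
  noncomm_ring

lemma w_symm (Y Z N : Matrix (Fin m) (Fin m) ℝ) (hYN : Y * N = 1)
    (hs : Yᵀ * Z - Zᵀ * Y = 0) : (Z * N)ᵀ = Z * N := by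
  have h1 : Zᵀ * Y = Yᵀ * Z := (sub_eq_zero.mp hs).symm
  have h2 : Nᵀ * Yᵀ = 1 := by
    rw [← Matrix.transpose_mul, hYN, Matrix.transpose_one]
  calc (Z * N)ᵀ = Nᵀ * Zᵀ := Matrix.transpose_mul _ _
    _ = Nᵀ * (Zᵀ * (Y * N)) := by rw [hYN, mul_one]
    _ = Nᵀ * ((Zᵀ * Y) * N) := by rw [mul_assoc]
    _ = Nᵀ * ((Yᵀ * Z) * N) := by rw [h1]
    _ = (Nᵀ * Yᵀ) * (Z * N) := by noncomm_ring
    _ = Z * N := by rw [h2, one_mul]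

section ContHelpers
variable {s : Set ℝ}

lemma contOn_mulVec {A : ℝ → Matrix (Fin m) (Fin m) ℝ} {v : ℝ → Fin m → ℝ}
    (hA : ContinuousOn A s) (hv : ContinuousOn v s) :
    ContinuousOn (fun t => A t *ᵥ v t) s := by
  have hF : Continuous (fun p : Matrix (Fin m) (Fin m) ℝ × (Fin m → ℝ) => p.1 *ᵥ p.2) :=
    Continuous.matrix_mulVec continuous_fst continuous_snd
  exact hF.comp_continuousOn (hA.prodMk hv)

lemma contOn_dot {f g : ℝ → Fin m → ℝ} (hf : ContinuousOn f s) (hg : ContinuousOn g s) :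
    ContinuousOn (fun t => f t ⬝ᵥ g t) s := by
  have hF : Continuous (fun p : (Fin m → ℝ) × (Fin m → ℝ) => p.1 ⬝ᵥ p.2) :=
    Continuous.dotProduct continuous_fst continuous_snd
  exact hF.comp_continuousOn (hf.prodMk hg)

lemma contOn_matmul {A B : ℝ → Matrix (Fin m) (Fin m) ℝ}
    (hA : ContinuousOn A s) (hB : ContinuousOn B s) :
    ContinuousOn (fun t => A t * B t) s := by
  have hF : Continuous (fun p : Matrix (Fin m) (Fin m) ℝ × Matrix (Fin m) (Fin m) ℝ =>
      p.1 * p.2) := Continuous.matrix_mul continuous_fst continuous_snd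
  exact hF.comp_continuousOn (hA.prodMk hB)

lemma contOn_inv {Y : ℝ → Matrix (Fin m) (Fin m) ℝ} (hY : ContinuousOn Y s)
    (hdet : ∀ t ∈ s, IsUnit (Y t).det) : ContinuousOn (fun t => (Y t)⁻¹) s := by
  intro t ht
  have h1 : ContinuousAt Ring.inverse (Y t).det :=
    NormedRing.inverse_continuousAt (hdet t ht).unit
  exact (continuousAt_matrix_inv (Y t) h1).comp_continuousWithinAt (hY t ht)

end ContHelpers

lemma eq_zero_of_integral_zero {f : ℝ → ℝ} {a b : ℝ} (hab : a < b)
    (hc : ContinuousOn f (Icc a b)) (h0 : ∀ t ∈ Icc a b, 0 ≤ f t)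
    (hint : (∫ t in a..b, f t) = 0) : ∀ t ∈ Icc a b, f t = 0 := by
  by_contra hcon
  push_neg at hcon
  obtain ⟨t0, ht0, hft0⟩ := hcon
  have hpos : 0 < f t0 := lt_of_le_of_ne (h0 t0 ht0) (Ne.symm hft0)
  have hcw : ContinuousWithinAt f (Icc a b) t0 := hc t0 ht0
  rw [Metric.continuousWithinAt_iff] at hcw
  obtain ⟨δ, hδ, hδ'⟩ := hcw (f t0 / 2) (by linarith)
  set c := max a (t0 - δ / 2) with hc'
  set d := min b (t0 + δ / 2) with hd'
  have hac : a ≤ c := le_max_left _ _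
  have hdb : d ≤ b := min_le_left _ _
  have hcd : c < d := by
    rw [hc', hd']
    rcases max_cases a (t0 - δ / 2) with ⟨h1, h2⟩ | ⟨h1, h2⟩ <;>
      rcases min_cases b (t0 + δ / 2) with ⟨h3, h4⟩ | ⟨h3, h4⟩ <;>
      · rw [h1, h3]; cases' ht0 with hta htb; linarith
  have hsub : Icc c d ⊆ Icc a b := Icc_subset_Icc hac hdb
  have hlower : ∀ x ∈ Icc c d, f t0 / 2 ≤ f x := by
    intro x hx
    have hx' : x ∈ Icc a b := hsub hx
    have hdist : dist x t0 < δ := by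
      rw [Real.dist_eq, abs_lt]
      cases' hx with h1 h2
      constructor <;> cases' ht0 with hta htb
      · have := le_max_right a (t0 - δ / 2); linarith
      · have := min_le_right b (t0 + δ / 2); linarith
    have := hδ' hx' hdist
    rw [Real.dist_eq, abs_lt] at this
    linarith [this.1]
  -- integrability on subintervals
  have hfi : IntervalIntegrable f volume a b := by
    apply ContinuousOn.intervalIntegrable
    rwa [uIcc_of_le hab.le]
  have hfi1 : IntervalIntegrable f volume a c :=
    hfi.mono_set (by rw [uIcc_of_le hab.le, uIcc_of_le hac]; exact Icc_subset_Icc le_rfl (hcd.le.trans hdb))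
  have hfi2 : IntervalIntegrable f volume c d :=
    hfi.mono_set (by rw [uIcc_of_le hab.le, uIcc_of_le hcd.le]; exact hsub)
  have hfi3 : IntervalIntegrable f volume d b :=
    hfi.mono_set (by rw [uIcc_of_le hab.le, uIcc_of_le hdb]; exact Icc_subset_Icc (hac.trans hcd.le) le_rfl)
  have hmid : 0 < ∫ t in c..d, f t := by
    apply intervalIntegral_pos_of_pos_on hfi2 _ hcd
    intro x hx
    exact lt_of_lt_of_le (by linarith) (hlower x (Ioo_subset_Icc_self hx))
  have h1 : 0 ≤ ∫ t in a..c, f t :=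
    intervalIntegral.integral_nonneg hac
      (fun x hx => h0 x ⟨hx.1, hx.2.trans (hcd.le.trans hdb)⟩)
  have h3 : 0 ≤ ∫ t in d..b, f t :=
    intervalIntegral.integral_nonneg hdb
      (fun x hx => h0 x ⟨(hac.trans hcd.le).trans hx.1, hx.2⟩)
  have hsum : (∫ t in a..b, f t) = (∫ t in a..c, f t) + (∫ t in c..d, f t) + ∫ t in d..b, f t := by
    rw [intervalIntegral.integral_add_adjacent_intervals hfi1 hfi2,
      intervalIntegral.integral_add_adjacent_intervals (hfi1.trans hfi2) hfi3]
  rw [hint] at hsum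
  linarith

/-- under the Picone hypotheses on `[a,b]` with `B(t)` positive
semidefinite and `y(a) = y(b) = 0`, one has `∫_a^b (zᵀBz + yᵀCy) dt ≥ 0`, with
equality only if `y ≡ 0` on `[a,b]`. -/
theorem statement_8 (m : ℕ) (hm : 1 ≤ m) (a b : ℝ) (hab : a < b)
    (A B C : ℝ → Matrix (Fin m) (Fin m) ℝ)
    (hAc : ContinuousOn A (Set.Icc a b)) (hBc : ContinuousOn B (Set.Icc a b))
    (hCc : ContinuousOn C (Set.Icc a b))
    (hBsymm : ∀ t ∈ Set.Icc a b, (B t)ᵀ = B t)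
    (hCsymm : ∀ t ∈ Set.Icc a b, (C t)ᵀ = C t)
    (hBpos : ∀ t ∈ Set.Icc a b, (B t).PosSemidef)
    (Y Z : ℝ → Matrix (Fin m) (Fin m) ℝ)
    (hY : ∀ t ∈ Set.Icc a b, ∀ i j,
      HasDerivAt (fun s => Y s i j) ((A t * Y t + B t * Z t) i j) t)
    (hZ : ∀ t ∈ Set.Icc a b, ∀ i j,
      HasDerivAt (fun s => Z s i j) ((C t * Y t - (A t)ᵀ * Z t) i j) t)
    (hsymp : ∀ t ∈ Set.Icc a b, (Y t)ᵀ * Z t - (Z t)ᵀ * Y t = 0)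
    (hYinv : ∀ t ∈ Set.Icc a b, IsUnit (Y t).det)
    (y z : ℝ → Fin m → ℝ)
    (hy : ∀ t ∈ Set.Icc a b, HasDerivAt y (A t *ᵥ y t + B t *ᵥ z t) t)
    (hy' : ContinuousOn (deriv y) (Set.Icc a b))
    (hz : ContinuousOn z (Set.Icc a b))
    (hya : y a = 0) (hyb : y b = 0) :
    0 ≤ (∫ t in a..b, (z t ⬝ᵥ (B t *ᵥ z t) + y t ⬝ᵥ (C t *ᵥ y t))) ∧
      ((∫ t in a..b, (z t ⬝ᵥ (B t *ᵥ z t) + y t ⬝ᵥ (C t *ᵥ y t))) = 0 →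
        ∀ t ∈ Set.Icc a b, y t = 0) := by
  set S := Set.Icc a b with hS
  -- matrix-level derivatives
  have hYd : ∀ t ∈ S, HasDerivAt Y (A t * Y t + B t * Z t) t :=
    fun t ht => hasDerivAt_matrix.2 (hY t ht)
  have hZd : ∀ t ∈ S, HasDerivAt Z (C t * Y t - (A t)ᵀ * Z t) t :=
    fun t ht => hasDerivAt_matrix.2 (hZ t ht)
  have hYc : ContinuousOn Y S := fun t ht => (hYd t ht).continuousAt.continuousWithinAt
  have hZc : ContinuousOn Z S := fun t ht => (hZd t ht).continuousAt.continuousWithinAt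
  have hyc : ContinuousOn y S := fun t ht => (hy t ht).continuousAt.continuousWithinAt
  set N : ℝ → Matrix (Fin m) (Fin m) ℝ := fun t => (Y t)⁻¹ with hNdef
  set W : ℝ → Matrix (Fin m) (Fin m) ℝ := fun t => Z t * (Y t)⁻¹ with hWdef
  have hYN : ∀ t ∈ S, Y t * (Y t)⁻¹ = 1 := fun t ht => Matrix.mul_nonsing_inv _ (hYinv t ht)
  have hNd : ∀ t ∈ S, HasDerivAt N
      (-((Y t)⁻¹ * (A t * Y t + B t * Z t) * (Y t)⁻¹)) t :=
    fun t ht => hasDerivAt_matrix_inv (hYd t ht) (hYinv t ht)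
  have hWd : ∀ t ∈ S,
      HasDerivAt W (C t - (A t)ᵀ * W t - W t * A t - W t * B t * W t) t := by
    intro t ht
    have h2 := (hZd t ht).mul (hNd t ht)
    rw [wderiv_eq _ _ _ _ _ _ (hYN t ht)] at h2
    exact h2
  have hWsym : ∀ t ∈ S, (W t)ᵀ = W t :=
    fun t ht => w_symm _ _ _ (hYN t ht) (hsymp t ht)
  -- continuity of W, q
  have hNc : ContinuousOn N S := contOn_inv hYc hYinv
  have hWc : ContinuousOn W S := contOn_matmul hZc hNc
  have huc : ContinuousOn (fun t => z t - W t *ᵥ y t) S := hz.sub (contOn_mulVec hWc hyc)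
  set q : ℝ → ℝ := fun t => (z t - W t *ᵥ y t) ⬝ᵥ (B t *ᵥ (z t - W t *ᵥ y t)) with hqdef
  have hqc : ContinuousOn q S := contOn_dot huc (contOn_mulVec hBc huc)
  have hIc : ContinuousOn (fun t => z t ⬝ᵥ (B t *ᵥ z t) + y t ⬝ᵥ (C t *ᵥ y t)) S :=
    (contOn_dot hz (contOn_mulVec hBc hz)).add (contOn_dot hyc (contOn_mulVec hCc hyc))
  set g : ℝ → ℝ := fun t => y t ⬝ᵥ (W t *ᵥ y t) with hgdef
  have hgd : ∀ t ∈ S, HasDerivAt g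
      ((z t ⬝ᵥ (B t *ᵥ z t) + y t ⬝ᵥ (C t *ᵥ y t)) - q t) t := by
    intro t ht
    have h3 := hasDerivAt_quadratic (y' := y) (hy t ht) (hWd t ht)
    rw [picone_algebra _ _ _ _ (hBsymm t ht) (hWsym t ht)] at h3
    exact h3
  -- integrability
  have hIint : IntervalIntegrable
      (fun t => z t ⬝ᵥ (B t *ᵥ z t) + y t ⬝ᵥ (C t *ᵥ y t)) volume a b := by
    apply ContinuousOn.intervalIntegrable; rwa [uIcc_of_le hab.le]
  have hqint : IntervalIntegrable q volume a b := by
    apply ContinuousOn.intervalIntegrable; rwa [uIcc_of_le hab.le]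
  -- FTC
  have hftc : (∫ t in a..b,
      ((z t ⬝ᵥ (B t *ᵥ z t) + y t ⬝ᵥ (C t *ᵥ y t)) - q t)) = g b - g a := by
    apply integral_eq_sub_of_hasDerivAt
    · intro t ht
      rw [uIcc_of_le hab.le] at ht
      exact hgd t ht
    · exact hIint.sub hqint
  have hga : g a = 0 := by simp [hgdef, hya]
  have hgb : g b = 0 := by simp [hgdef, hyb]
  have key : (∫ t in a..b, (z t ⬝ᵥ (B t *ᵥ z t) + y t ⬝ᵥ (C t *ᵥ y t)))
      = ∫ t in a..b, q t := by
    rw [intervalIntegral.integral_sub hIint hqint, hga, hgb] at hftc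
    linarith
  have hqnonneg : ∀ t ∈ S, 0 ≤ q t := by
    intro t ht
    simpa [hqdef] using (hBpos t ht).dotProduct_mulVec_nonneg (z t - W t *ᵥ y t)
  constructor
  · rw [key]
    exact intervalIntegral.integral_nonneg hab.le (fun t ht => hqnonneg t ht)
  · intro h0 t ht
    rw [key] at h0
    have hq0 : ∀ s ∈ S, q s = 0 := eq_zero_of_integral_zero hab hqc hqnonneg h0
    have hBu : ∀ s ∈ S, B s *ᵥ (z s - W s *ᵥ y s) = 0 := by
      intro s hs
      refine ((hBpos s hs).dotProduct_mulVec_zero_iff _).1 ?_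
      simpa [hqdef] using hq0 s hs
    -- ODE uniqueness
    set M : ℝ → Matrix (Fin m) (Fin m) ℝ := fun t => A t + B t * W t with hMdef
    have hMc : ContinuousOn M S := hAc.add (contOn_matmul hBc hWc)
    set τ : ℝ → ℝ := fun t => max a (min t b) with hτdef
    have hτcont : Continuous τ := continuous_const.max (continuous_id.min continuous_const)
    have hτmem : ∀ t, τ t ∈ S := fun t => ⟨le_max_left _ _, max_le hab.le (min_le_right _ _)⟩
    have hτid : ∀ t ∈ S, τ t = t := fun t ht => by
      simp only [hτdef]; rw [min_eq_left ht.2, max_eq_right ht.1]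
    obtain ⟨K, hK⟩ : ∃ K, ∀ t, ‖M (τ t)‖ ≤ K := by
      obtain ⟨K, hK⟩ := isCompact_Icc.exists_bound_of_continuousOn hMc
      exact ⟨K, fun t => hK _ (hτmem t)⟩
    set K' : NNReal := ⟨max K 0, le_max_right _ _⟩ with hK'def
    have hlip : ∀ s : ℝ, LipschitzWith K' (fun x : Fin m → ℝ => M (τ s) *ᵥ x) := by
      intro s
      apply LipschitzWith.of_dist_le_mul
      intro x x'
      rw [dist_eq_norm, dist_eq_norm, ← Matrix.mulVec_sub]
      calc ‖M (τ s) *ᵥ (x - x')‖ ≤ ‖M (τ s)‖ * ‖x - x'‖ := Matrix.linfty_opNorm_mulVec _ _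
        _ ≤ K' * ‖x - x'‖ := by
            apply mul_le_mul_of_nonneg_right _ (norm_nonneg _)
            exact (hK s).trans (le_max_left _ _)
    have hf' : ∀ s ∈ Set.Ico a b, HasDerivWithinAt y (M (τ s) *ᵥ y s) (Set.Ici s) s := by
      intro s hs
      have hs' : s ∈ S := Set.Ico_subset_Icc_self hs
      have h1 := (hy s hs').hasDerivWithinAt (s := Set.Ici s)
      have h2 : M (τ s) *ᵥ y s = A s *ᵥ y s + B s *ᵥ z s := by
        rw [hτid s hs']
        have hbu := hBu s hs'
        rw [Matrix.mulVec_sub, sub_eq_zero] at hbu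
        calc M s *ᵥ y s = A s *ᵥ y s + (B s * W s) *ᵥ y s := Matrix.add_mulVec _ _ _
          _ = A s *ᵥ y s + B s *ᵥ (W s *ᵥ y s) := by rw [← Matrix.mulVec_mulVec]
          _ = A s *ᵥ y s + B s *ᵥ z s := by rw [← hbu]
      rw [h2]
      exact h1
    have hg' : ∀ s ∈ Set.Ico a b,
        HasDerivWithinAt (fun _ : ℝ => (0 : Fin m → ℝ)) (M (τ s) *ᵥ (0 : Fin m → ℝ))
          (Set.Ici s) s := by
      intro s hs
      rw [Matrix.mulVec_zero]
      exact (hasDerivAt_const s (0 : Fin m → ℝ)).hasDerivWithinAt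
    have hEq : Set.EqOn y (fun _ => (0 : Fin m → ℝ)) (Set.Icc a b) :=
      ODE_solution_unique hlip hyc hf' continuousOn_const hg' hya
    exact hEq ht
end

section
/- Suppose h : [a,b] → ℝ^n is a smooth solution of the Jacobi equation. Define y(t) ∈ ℝ^{kn} as the concatenation (h(t), h'(t), …, h^{(k−1)}(t)) and z(t) = (z_1(t), …, z_k(t)) ∈ ℝ^{kn} with z_i = Σ_{j=i}^k (−1)^{j−i} (d/dt)^{j−i} p_j (the Legendre transform of the (2k−1)-jet of h). Then (y, z) solves the linear Hamiltonian system y'(t) = A(t) y(t) + B(t) z(t), z'(t) = C(t) y(t) − A(t)ᵀ z(t) on [a,b]. -/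
open Matrix

/-- The `kn × kn` block matrix `A(t)`: identity blocks in positions `(i, i+1)` for
`1 ≤ i ≤ k−1`, block `−M_kk⁻¹ M_{(k−1)k}ᵀ` in position `(k,k)`, zero elsewhere
(blocks indexed by `Fin k`, `0`-based). -/
noncomputable def Ablk (n k : ℕ) (M : ℕ → ℕ → ℝ → Matrix (Fin n) (Fin n) ℝ) (t : ℝ) :
    Matrix (Fin k × Fin n) (Fin k × Fin n) ℝ := fun p q =>
  if (q.1 : ℕ) = (p.1 : ℕ) + 1 then (1 : Matrix (Fin n) (Fin n) ℝ) p.2 q.2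
  else if (p.1 : ℕ) = k - 1 ∧ (q.1 : ℕ) = k - 1 then
    (-((M k k t)⁻¹ * (M (k - 1) k t)ᵀ)) p.2 q.2
  else 0

/-- The `kn × kn` block matrix `B(t)`: block `M_kk⁻¹` in position `(k,k)`, zero
elsewhere. -/
noncomputable def Bblk (n k : ℕ) (M : ℕ → ℕ → ℝ → Matrix (Fin n) (Fin n) ℝ) (t : ℝ) :
    Matrix (Fin k × Fin n) (Fin k × Fin n) ℝ := fun p q =>
  if (p.1 : ℕ) = k - 1 ∧ (q.1 : ℕ) = k - 1 then (M k k t)⁻¹ p.2 q.2 else 0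

/-- The `kn × kn` block-tridiagonal matrix `C(t)`: diagonal blocks `M_{(i−1)(i−1)}`
for `1 ≤ i ≤ k−1` and `M_{(k−1)(k−1)} − M_{(k−1)k} M_kk⁻¹ M_{(k−1)k}ᵀ` at `(k,k)`,
off-diagonal blocks `C_{i(i+1)} = M_{(i−1)i}` and `C_{(i+1)i} = M_{(i−1)i}ᵀ`. -/
noncomputable def Cblk (n k : ℕ) (M : ℕ → ℕ → ℝ → Matrix (Fin n) (Fin n) ℝ) (t : ℝ) :
    Matrix (Fin k × Fin n) (Fin k × Fin n) ℝ := fun p q =>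
  if p.1 = q.1 then
    (if (p.1 : ℕ) = k - 1 then
        M (k - 1) (k - 1) t - M (k - 1) k t * (M k k t)⁻¹ * (M (k - 1) k t)ᵀ
      else M (p.1 : ℕ) (p.1 : ℕ) t) p.2 q.2
  else if (q.1 : ℕ) = (p.1 : ℕ) + 1 then (M (p.1 : ℕ) ((p.1 : ℕ) + 1) t) p.2 q.2
  else if (p.1 : ℕ) = (q.1 : ℕ) + 1 then ((M (q.1 : ℕ) ((q.1 : ℕ) + 1) t)ᵀ) p.2 q.2
  else 0

/-- `ŷ(t) ∈ ℝ^{kn}`: the concatenation `(h(t), h'(t), …, h^{(k−1)}(t))`. -/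
noncomputable def yhat (n k : ℕ) (h : ℝ → Fin n → ℝ) (t : ℝ) : Fin k × Fin n → ℝ :=
  fun p => iteratedDeriv (p.1 : ℕ) h t p.2

/-- `ẑ(t) ∈ ℝ^{kn}`: the zeroing transform
`(0, …, 0, M_kk h^{(k)} + M_{(k−1)k}ᵀ h^{(k−1)})` of the `k`-jet of `h`. -/
noncomputable def zhat (n k : ℕ) (M : ℕ → ℕ → ℝ → Matrix (Fin n) (Fin n) ℝ)
    (h : ℝ → Fin n → ℝ) (t : ℝ) : Fin k × Fin n → ℝ := fun p =>
  if (p.1 : ℕ) = k - 1 then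
    (M k k t *ᵥ iteratedDeriv k h t + (M (k - 1) k t)ᵀ *ᵥ iteratedDeriv (k - 1) h t) p.2
  else 0

/-- The Legendre-transform momenta: `z_i = ∑_{j=i}^k (−1)^{j−i} (d/dt)^{j−i} p_j`,
arranged as a vector in `ℝ^{kn}` (here the block index `p.1 : Fin k` is `0`-based,
representing `z_{p.1+1}`). -/
noncomputable def zLeg (n k : ℕ) (M : ℕ → ℕ → ℝ → Matrix (Fin n) (Fin n) ℝ)
    (h : ℝ → Fin n → ℝ) (t : ℝ) : Fin k × Fin n → ℝ := fun p =>
  (∑ j ∈ Finset.Icc ((p.1 : ℕ) + 1) k,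
    ((-1 : ℝ) ^ (j - ((p.1 : ℕ) + 1))) •
      iteratedDeriv (j - ((p.1 : ℕ) + 1)) (pMom n k M h j) t) p.2



section AuxHelpers
open Finset

lemma iterCD {nn : ℕ} {g : ℝ → Fin nn → ℝ} (hg : ContDiff ℝ (⊤ : ℕ∞) g) (m : ℕ) :
    ContDiff ℝ (⊤ : ℕ∞) (iteratedDeriv m g) := by
  rw [iteratedDeriv_eq_iterate]
  exact ContDiff.iterate_deriv m hg

lemma hasDA_iter {nn : ℕ} {g : ℝ → Fin nn → ℝ} (hg : ContDiff ℝ (⊤ : ℕ∞) g) (m : ℕ) (t : ℝ)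
    (r : Fin nn) :
    HasDerivAt (fun s => iteratedDeriv m g s r) (iteratedDeriv (m + 1) g t r) t := by
  have h1 : HasDerivAt (iteratedDeriv m g) (iteratedDeriv (m + 1) g t) t := by
    rw [iteratedDeriv_succ]
    exact ((iterCD hg m).differentiable (by simp) t).hasDerivAt
  exact hasDerivAt_pi.1 h1 r

lemma cdMulVec {nn : ℕ} {N : ℝ → Matrix (Fin nn) (Fin nn) ℝ}
    (hN : ∀ r c, ContDiff ℝ (⊤ : ℕ∞) fun t => N t r c) {v : ℝ → Fin nn → ℝ}
    (hv : ContDiff ℝ (⊤ : ℕ∞) v) : ContDiff ℝ (⊤ : ℕ∞) fun t => N t *ᵥ v t := by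
  rw [contDiff_pi]
  intro r
  have : (fun t => (N t *ᵥ v t) r) = fun t => ∑ c, N t r c * v t c := by
    funext t; simp [Matrix.mulVec, dotProduct]
  rw [this]
  exact ContDiff.sum fun c _ => (hN r c).mul (contDiff_pi.1 hv c)

lemma sum_fin_ite {k : ℕ} (m : ℕ) (f : Fin k → ℝ) :
    (∑ q : Fin k, if (q : ℕ) = m then f q else 0) =
      if hm : m < k then f ⟨m, hm⟩ else 0 := by
  split_ifs with hm
  · rw [Finset.sum_eq_single (⟨m, hm⟩ : Fin k)]
    · simp
    · intro q _ hq
      rw [if_neg (fun hqm => hq (Fin.ext hqm))]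
    · simp
  · apply Finset.sum_eq_zero; intro q _
    rw [if_neg]
    have := q.isLt; omega

end AuxHelpers

lemma cdpMom {n k : ℕ} {M : ℕ → ℕ → ℝ → Matrix (Fin n) (Fin n) ℝ}
    (hM : ∀ i j r c, ContDiff ℝ (⊤ : ℕ∞) fun t => M i j t r c)
    {h : ℝ → Fin n → ℝ} (hh : ContDiff ℝ (⊤ : ℕ∞) h) (j : ℕ) :
    ContDiff ℝ (⊤ : ℕ∞) (pMom n k M h j) := by
  unfold pMom
  by_cases hj0 : j = 0
  · simp only [hj0, if_true]
    exact (cdMulVec (hM 0 0) hh).add (cdMulVec (hM 0 1) (iterCD hh 1))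
  · by_cases hjk : j = k
    · subst hjk
      simp only [if_neg hj0, if_pos rfl]
      exact (cdMulVec (hM j j) (iterCD hh j)).add
        (cdMulVec (N := fun t => (M (j-1) j t)ᵀ)
          (fun r c => by simpa [Matrix.transpose_apply] using hM (j-1) j c r) (iterCD hh (j-1)))
    · simp only [if_neg hj0, if_neg hjk]
      exact ((cdMulVec (hM j j) (iterCD hh j)).add
        (cdMulVec (N := fun t => (M (j-1) j t)ᵀ)
          (fun r c => by simpa [Matrix.transpose_apply] using hM (j-1) j c r) (iterCD hh (j-1)))).add
        (cdMulVec (hM j (j+1)) (iterCD hh (j+1)))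

variable {n k : ℕ} {M : ℕ → ℕ → ℝ → Matrix (Fin n) (Fin n) ℝ} {t : ℝ}

lemma Ablk_mulVec (v : Fin k × Fin n → ℝ) (p : Fin k × Fin n) :
    (Ablk n k M t *ᵥ v) p =
      (if h1 : (p.1 : ℕ) + 1 < k then v (⟨(p.1 : ℕ) + 1, h1⟩, p.2) else 0) +
      (if (p.1 : ℕ) = k - 1 then
        ∑ c, (-((M k k t)⁻¹ * (M (k - 1) k t)ᵀ)) p.2 c * v (p.1, c) else 0) := by
  simp only [Matrix.mulVec, dotProduct]
  rw [Fintype.sum_prod_type]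
  have key : ∀ q1 : Fin k, (∑ q2, Ablk n k M t p (q1, q2) * v (q1, q2)) =
      (if (q1 : ℕ) = (p.1 : ℕ) + 1 then v (q1, p.2) else 0) +
      (if (p.1 : ℕ) = k - 1 then
        (if (q1 : ℕ) = k - 1 then
          ∑ c, (-((M k k t)⁻¹ * (M (k - 1) k t)ᵀ)) p.2 c * v (q1, c) else 0) else 0) := by
    intro q1
    have E : ∀ q2, Ablk n k M t p (q1, q2) =
        (if (q1 : ℕ) = (p.1 : ℕ) + 1 then (1 : Matrix (Fin n) (Fin n) ℝ) p.2 q2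
         else if (p.1 : ℕ) = k - 1 ∧ (q1 : ℕ) = k - 1 then
           (-((M k k t)⁻¹ * (M (k - 1) k t)ᵀ)) p.2 q2
         else 0) := fun q2 => rfl
    by_cases h1 : (q1 : ℕ) = (p.1 : ℕ) + 1
    · have h2 : ¬((p.1 : ℕ) = k - 1) := by have := q1.isLt; omega
      rw [if_pos h1, if_neg h2, add_zero]
      calc (∑ q2, Ablk n k M t p (q1, q2) * v (q1, q2))
          = ∑ q2, (if p.2 = q2 then v (q1, q2) else 0) := by
            apply Finset.sum_congr rfl; intro q2 _
            rw [E q2, if_pos h1, Matrix.one_apply]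
            by_cases hq : p.2 = q2
            · rw [if_pos hq, if_pos hq, one_mul]
            · rw [if_neg hq, if_neg hq, zero_mul]
        _ = v (q1, p.2) := by simp
    · rw [if_neg h1]
      by_cases h3 : (p.1 : ℕ) = k - 1
      · by_cases h4 : (q1 : ℕ) = k - 1
        · rw [if_pos h3, if_pos h4, zero_add]
          apply Finset.sum_congr rfl; intro q2 _
          rw [E q2, if_neg h1, if_pos ⟨h3, h4⟩]
        · rw [if_pos h3, if_neg h4, add_zero]
          apply Finset.sum_eq_zero; intro q2 _
          rw [E q2, if_neg h1, if_neg (fun hh => h4 hh.2), zero_mul]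
      · rw [if_neg h3, add_zero]
        apply Finset.sum_eq_zero; intro q2 _
        rw [E q2, if_neg h1, if_neg (fun hh => h3 hh.1), zero_mul]
  rw [Finset.sum_congr rfl fun q1 _ => key q1, Finset.sum_add_distrib]
  congr 1
  · rw [sum_fin_ite ((p.1 : ℕ) + 1) (fun q1 => v (q1, p.2))]
  · by_cases hp : (p.1 : ℕ) = k - 1
    · simp only [hp, if_true]
      rw [sum_fin_ite (k - 1) (fun q1 => ∑ c, (-((M k k t)⁻¹ * (M (k - 1) k t)ᵀ)) p.2 c * v (q1, c))]
      have hk1 : k - 1 < k := by have := p.1.isLt; omega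
      rw [dif_pos hk1]
      have : (⟨k - 1, hk1⟩ : Fin k) = p.1 := Fin.ext hp.symm
      rw [this]
    · simp only [hp, if_false]
      exact Finset.sum_eq_zero fun q1 _ => rfl

lemma Bblk_mulVec (v : Fin k × Fin n → ℝ) (p : Fin k × Fin n) :
    (Bblk n k M t *ᵥ v) p =
      if (p.1 : ℕ) = k - 1 then ∑ c, (M k k t)⁻¹ p.2 c * v (p.1, c) else 0 := by
  simp only [Matrix.mulVec, dotProduct]
  rw [Fintype.sum_prod_type]
  have key : ∀ q1 : Fin k, (∑ q2, Bblk n k M t p (q1, q2) * v (q1, q2)) =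
      (if (p.1 : ℕ) = k - 1 then
        (if (q1 : ℕ) = k - 1 then ∑ c, (M k k t)⁻¹ p.2 c * v (q1, c) else 0) else 0) := by
    intro q1
    have E : ∀ q2, Bblk n k M t p (q1, q2) =
        (if (p.1 : ℕ) = k - 1 ∧ (q1 : ℕ) = k - 1 then (M k k t)⁻¹ p.2 q2 else 0) :=
      fun q2 => rfl
    by_cases h3 : (p.1 : ℕ) = k - 1
    · by_cases h4 : (q1 : ℕ) = k - 1
      · rw [if_pos h3, if_pos h4]
        apply Finset.sum_congr rfl; intro q2 _
        rw [E q2, if_pos ⟨h3, h4⟩]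
      · rw [if_pos h3, if_neg h4]
        apply Finset.sum_eq_zero; intro q2 _
        rw [E q2, if_neg (fun hh => h4 hh.2), zero_mul]
    · rw [if_neg h3]
      apply Finset.sum_eq_zero; intro q2 _
      rw [E q2, if_neg (fun hh => h3 hh.1), zero_mul]
  rw [Finset.sum_congr rfl fun q1 _ => key q1]
  by_cases hp : (p.1 : ℕ) = k - 1
  · simp only [hp, if_true]
    rw [sum_fin_ite (k - 1) (fun q1 => ∑ c, (M k k t)⁻¹ p.2 c * v (q1, c))]
    have hk1 : k - 1 < k := by have := p.1.isLt; omega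
    rw [dif_pos hk1]
    have : (⟨k - 1, hk1⟩ : Fin k) = p.1 := Fin.ext hp.symm
    rw [this]
  · simp only [hp, if_false]
    exact Finset.sum_eq_zero fun q1 _ => rfl

lemma Ablk_t_mulVec (v : Fin k × Fin n → ℝ) (p : Fin k × Fin n) :
    ((Ablk n k M t)ᵀ *ᵥ v) p =
      (if h1 : 0 < (p.1 : ℕ) then v (⟨(p.1 : ℕ) - 1, by have := p.1.isLt; omega⟩, p.2) else 0) +
      (if (p.1 : ℕ) = k - 1 then
        ∑ c, (-((M k k t)⁻¹ * (M (k - 1) k t)ᵀ)) c p.2 * v (p.1, c) else 0) := by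
  simp only [Matrix.mulVec, dotProduct, Matrix.transpose_apply]
  rw [Fintype.sum_prod_type]
  have key : ∀ q1 : Fin k, (∑ q2, Ablk n k M t (q1, q2) p * v (q1, q2)) =
      (if (q1 : ℕ) = (p.1 : ℕ) - 1 ∧ 0 < (p.1 : ℕ) then v (q1, p.2) else 0) +
      (if (p.1 : ℕ) = k - 1 then
        (if (q1 : ℕ) = k - 1 then
          ∑ c, (-((M k k t)⁻¹ * (M (k - 1) k t)ᵀ)) c p.2 * v (q1, c) else 0) else 0) := by
    intro q1
    have E : ∀ q2, Ablk n k M t (q1, q2) p =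
        (if (p.1 : ℕ) = (q1 : ℕ) + 1 then (1 : Matrix (Fin n) (Fin n) ℝ) q2 p.2
         else if (q1 : ℕ) = k - 1 ∧ (p.1 : ℕ) = k - 1 then
           (-((M k k t)⁻¹ * (M (k - 1) k t)ᵀ)) q2 p.2
         else 0) := fun q2 => rfl
    by_cases h1 : (p.1 : ℕ) = (q1 : ℕ) + 1
    · have h1' : (q1 : ℕ) = (p.1 : ℕ) - 1 ∧ 0 < (p.1 : ℕ) := by omega
      have h2 : ¬((q1 : ℕ) = k - 1) := by have := p.1.isLt; omega
      rw [if_pos h1']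
      have hz : (if (p.1 : ℕ) = k - 1 then
          (if (q1 : ℕ) = k - 1 then
            ∑ c, (-((M k k t)⁻¹ * (M (k - 1) k t)ᵀ)) c p.2 * v (q1, c) else 0) else 0) = 0 := by
        split_ifs with ha
        · rfl
        · rfl
      rw [hz, add_zero]
      calc (∑ q2, Ablk n k M t (q1, q2) p * v (q1, q2))
          = ∑ q2, (if q2 = p.2 then v (q1, q2) else 0) := by
            apply Finset.sum_congr rfl; intro q2 _
            rw [E q2, if_pos h1, Matrix.one_apply]
            by_cases hq : q2 = p.2
            · rw [if_pos hq, if_pos hq, one_mul]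
            · rw [if_neg hq, if_neg hq, zero_mul]
        _ = v (q1, p.2) := by simp
    · by_cases h3 : (p.1 : ℕ) = k - 1
      · by_cases h4 : (q1 : ℕ) = k - 1
        · have h1' : ¬((q1 : ℕ) = (p.1 : ℕ) - 1 ∧ 0 < (p.1 : ℕ)) := by
            have := q1.isLt; omega
          rw [if_neg h1', if_pos h3, if_pos h4, zero_add]
          apply Finset.sum_congr rfl; intro q2 _
          rw [E q2, if_neg h1, if_pos ⟨h4, h3⟩]
        · have h1' : ¬((q1 : ℕ) = (p.1 : ℕ) - 1 ∧ 0 < (p.1 : ℕ)) := by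
            have := q1.isLt; have := p.1.isLt; omega
          rw [if_neg h1', if_pos h3, if_neg h4, zero_add]
          apply Finset.sum_eq_zero; intro q2 _
          rw [E q2, if_neg h1, if_neg (fun hh => h4 hh.1), zero_mul]
      · have h1' : ¬((q1 : ℕ) = (p.1 : ℕ) - 1 ∧ 0 < (p.1 : ℕ)) := by omega
        rw [if_neg h1', if_neg h3, zero_add]
        apply Finset.sum_eq_zero; intro q2 _
        rw [E q2, if_neg h1, if_neg (fun hh => h3 hh.2), zero_mul]
  rw [Finset.sum_congr rfl fun q1 _ => key q1, Finset.sum_add_distrib]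
  congr 1
  · by_cases hpos : 0 < (p.1 : ℕ)
    · have hc : ∀ q1 : Fin k, ((q1 : ℕ) = (p.1 : ℕ) - 1 ∧ 0 < (p.1 : ℕ)) = ((q1 : ℕ) = (p.1 : ℕ) - 1) := by
        intro q1; simp [hpos]
      simp only [hc]
      rw [sum_fin_ite ((p.1 : ℕ) - 1) (fun q1 => v (q1, p.2))]
      have hlt : (p.1 : ℕ) - 1 < k := by have := p.1.isLt; omega
      rw [dif_pos hlt, dif_pos hpos]
    · rw [dif_neg hpos]
      apply Finset.sum_eq_zero; intro q1 _
      rw [if_neg (fun hh => hpos hh.2)]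
  · by_cases hp : (p.1 : ℕ) = k - 1
    · simp only [hp, if_true]
      rw [sum_fin_ite (k - 1) (fun q1 => ∑ c, (-((M k k t)⁻¹ * (M (k - 1) k t)ᵀ)) c p.2 * v (q1, c))]
      have hk1 : k - 1 < k := by have := p.1.isLt; omega
      rw [dif_pos hk1]
      have : (⟨k - 1, hk1⟩ : Fin k) = p.1 := Fin.ext hp.symm
      rw [this]
    · simp only [hp, if_false]
      exact Finset.sum_eq_zero fun q1 _ => rfl

lemma Cblk_mulVec (v : Fin k × Fin n → ℝ) (p : Fin k × Fin n) :
    (Cblk n k M t *ᵥ v) p =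
      (∑ c, (if (p.1 : ℕ) = k - 1 then
          M (k - 1) (k - 1) t - M (k - 1) k t * (M k k t)⁻¹ * (M (k - 1) k t)ᵀ
        else M (p.1 : ℕ) (p.1 : ℕ) t) p.2 c * v (p.1, c)) +
      (if h1 : (p.1 : ℕ) + 1 < k then
        ∑ c, (M (p.1 : ℕ) ((p.1 : ℕ) + 1) t) p.2 c * v (⟨(p.1 : ℕ) + 1, h1⟩, c) else 0) +
      (if h2 : 0 < (p.1 : ℕ) then
        ∑ c, ((M ((p.1 : ℕ) - 1) (p.1 : ℕ) t)ᵀ) p.2 c *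
          v (⟨(p.1 : ℕ) - 1, by have := p.1.isLt; omega⟩, c) else 0) := by
  simp only [Matrix.mulVec, dotProduct]
  rw [Fintype.sum_prod_type]
  set D : Matrix (Fin n) (Fin n) ℝ := (if (p.1 : ℕ) = k - 1 then
      M (k - 1) (k - 1) t - M (k - 1) k t * (M k k t)⁻¹ * (M (k - 1) k t)ᵀ
    else M (p.1 : ℕ) (p.1 : ℕ) t) with hD
  have key : ∀ q1 : Fin k, (∑ q2, Cblk n k M t p (q1, q2) * v (q1, q2)) =
      (if (q1 : ℕ) = (p.1 : ℕ) then ∑ c, D p.2 c * v (q1, c) else 0) +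
      (if (q1 : ℕ) = (p.1 : ℕ) + 1 then
        ∑ c, (M (p.1 : ℕ) ((p.1 : ℕ) + 1) t) p.2 c * v (q1, c) else 0) +
      (if (q1 : ℕ) = (p.1 : ℕ) - 1 ∧ 0 < (p.1 : ℕ) then
        ∑ c, ((M ((p.1 : ℕ) - 1) (p.1 : ℕ) t)ᵀ) p.2 c * v (q1, c) else 0) := by
    intro q1
    have E : ∀ q2, Cblk n k M t p (q1, q2) =
        (if p.1 = q1 then D p.2 q2
         else if (q1 : ℕ) = (p.1 : ℕ) + 1 then (M (p.1 : ℕ) ((p.1 : ℕ) + 1) t) p.2 q2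
         else if (p.1 : ℕ) = (q1 : ℕ) + 1 then ((M (q1 : ℕ) ((q1 : ℕ) + 1) t)ᵀ) p.2 q2
         else 0) := fun q2 => rfl
    by_cases h1 : (q1 : ℕ) = (p.1 : ℕ)
    · have he : p.1 = q1 := Fin.ext h1.symm
      have h2 : ¬((q1 : ℕ) = (p.1 : ℕ) + 1) := by omega
      have h3 : ¬((q1 : ℕ) = (p.1 : ℕ) - 1 ∧ 0 < (p.1 : ℕ)) := by omega
      rw [if_pos h1, if_neg h2, if_neg h3, add_zero, add_zero]
      apply Finset.sum_congr rfl; intro q2 _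
      rw [E q2, if_pos he]
    · have he : ¬(p.1 = q1) := fun hh => h1 (congrArg Fin.val hh).symm
      by_cases h2 : (q1 : ℕ) = (p.1 : ℕ) + 1
      · have h3 : ¬((q1 : ℕ) = (p.1 : ℕ) - 1 ∧ 0 < (p.1 : ℕ)) := by omega
        rw [if_neg h1, if_pos h2, if_neg h3, zero_add, add_zero]
        apply Finset.sum_congr rfl; intro q2 _
        rw [E q2, if_neg he, if_pos h2]
      · by_cases h3 : (p.1 : ℕ) = (q1 : ℕ) + 1
        · have h3' : (q1 : ℕ) = (p.1 : ℕ) - 1 ∧ 0 < (p.1 : ℕ) := by omega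
          rw [if_neg h1, if_neg h2, if_pos h3', zero_add, zero_add]
          apply Finset.sum_congr rfl; intro q2 _
          rw [E q2, if_neg he, if_neg h2, if_pos h3]
          have hq : (q1 : ℕ) = (p.1 : ℕ) - 1 := h3'.1
          rw [hq]
          have hq1 : (p.1 : ℕ) - 1 + 1 = (p.1 : ℕ) := by omega
          rw [hq1]
        · have h3' : ¬((q1 : ℕ) = (p.1 : ℕ) - 1 ∧ 0 < (p.1 : ℕ)) := by omega
          rw [if_neg h1, if_neg h2, if_neg h3', zero_add, zero_add]
          apply Finset.sum_eq_zero; intro q2 _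
          rw [E q2, if_neg he, if_neg h2, if_neg h3, zero_mul]
  rw [Finset.sum_congr rfl fun q1 _ => key q1, Finset.sum_add_distrib, Finset.sum_add_distrib]
  have goal3 : (∑ q1 : Fin k, if (q1 : ℕ) = (p.1 : ℕ) - 1 ∧ 0 < (p.1 : ℕ) then
      ∑ c, ((M ((p.1 : ℕ) - 1) (p.1 : ℕ) t)ᵀ) p.2 c * v (q1, c) else 0) =
      (if h2 : 0 < (p.1 : ℕ) then
        ∑ c, ((M ((p.1 : ℕ) - 1) (p.1 : ℕ) t)ᵀ) p.2 c *
          v (⟨(p.1 : ℕ) - 1, by have := p.1.isLt; omega⟩, c) else 0) := by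
    by_cases hpos : 0 < (p.1 : ℕ)
    · have hc : ∀ q1 : Fin k, ((q1 : ℕ) = (p.1 : ℕ) - 1 ∧ 0 < (p.1 : ℕ)) = ((q1 : ℕ) = (p.1 : ℕ) - 1) := by
        intro q1; simp [hpos]
      simp only [hc]
      rw [sum_fin_ite ((p.1 : ℕ) - 1) (fun q1 => ∑ c, ((M ((p.1 : ℕ) - 1) (p.1 : ℕ) t)ᵀ) p.2 c * v (q1, c))]
      have hlt : (p.1 : ℕ) - 1 < k := by have := p.1.isLt; omega
      rw [dif_pos hlt, dif_pos hpos]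
    · rw [dif_neg hpos]
      apply Finset.sum_eq_zero; intro q1 _
      rw [if_neg (fun hh => hpos hh.2)]
  have goal1 : (∑ q1 : Fin k, if (q1 : ℕ) = (p.1 : ℕ) then ∑ c, D p.2 c * v (q1, c) else 0) =
      ∑ c, D p.2 c * v (p.1, c) := by
    rw [sum_fin_ite ((p.1 : ℕ)) (fun q1 => ∑ c, D p.2 c * v (q1, c))]
    have hlt : (p.1 : ℕ) < k := p.1.isLt
    rw [dif_pos hlt]
    try rw [show (⟨(p.1 : ℕ), hlt⟩ : Fin k) = p.1 from Fin.ext rfl]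
  have goal2 : (∑ q1 : Fin k, if (q1 : ℕ) = (p.1 : ℕ) + 1 then
      ∑ c, (M (p.1 : ℕ) ((p.1 : ℕ) + 1) t) p.2 c * v (q1, c) else 0) =
      (if h1 : (p.1 : ℕ) + 1 < k then
        ∑ c, (M (p.1 : ℕ) ((p.1 : ℕ) + 1) t) p.2 c * v (⟨(p.1 : ℕ) + 1, h1⟩, c) else 0) := by
    rw [sum_fin_ite ((p.1 : ℕ) + 1) (fun q1 => ∑ c, (M (p.1 : ℕ) ((p.1 : ℕ) + 1) t) p.2 c * v (q1, c))]
  rw [goal3, goal1, goal2]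


/-- if `h` is a smooth solution of the Jacobi equation, then the Legendre
transform `(y, z)` of its `(2k−1)`-jet solves the linear Hamiltonian system
`y' = A y + B z`, `z' = C y − Aᵀ z` on `[a,b]`. -/
theorem statement_9 (n k : ℕ) (hn : 1 ≤ n) (hk : 1 ≤ k) (a b : ℝ) (hab : a < b)
    (M : ℕ → ℕ → ℝ → Matrix (Fin n) (Fin n) ℝ)
    (hMsmooth : ∀ i j r c, ContDiff ℝ (⊤ : ℕ∞) fun t => M i j t r c)
    (hMsymm : ∀ i, i ≤ k → ∀ t ∈ Set.Icc a b, (M i i t).IsSymm)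
    (hMpos : ∀ t ∈ Set.Icc a b, (M k k t).PosDef)
    (h : ℝ → Fin n → ℝ) (hsol : IsJacobiSolution n k M a b h) :
    ∀ t ∈ Set.Icc a b,
      HasDerivAt (yhat n k h)
        (Ablk n k M t *ᵥ yhat n k h t + Bblk n k M t *ᵥ zLeg n k M h t) t ∧
      HasDerivAt (zLeg n k M h)
        (Cblk n k M t *ᵥ yhat n k h t - (Ablk n k M t)ᵀ *ᵥ zLeg n k M h t) t := by
  obtain ⟨hh', hjac⟩ := hsol
  have hh : ContDiff ℝ (⊤ : ℕ∞) h := hh'.of_le (by simp)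
  have hM : ∀ i j r c, ContDiff ℝ (⊤ : ℕ∞) fun t => M i j t r c :=
    fun i j r c => (hMsmooth i j r c).of_le (by simp)
  intro t ht
  have hk0 : k ≠ 0 := by omega
  have hdet : IsUnit (M k k t).det := ((hMpos t ht).det_pos).ne'.isUnit
  have hinvmul : (M k k t)⁻¹ * M k k t = 1 := Matrix.nonsing_inv_mul _ hdet
  have hcanc : ∀ i : ℕ, M i k t * (M k k t)⁻¹ * M k k t = M i k t := fun i => by
    rw [mul_assoc, hinvmul, mul_one]
  have hsym : (M k k t)ᵀ = M k k t := hMsymm k le_rfl t ht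
  have hinvsym : ((M k k t)⁻¹)ᵀ = (M k k t)⁻¹ := by
    rw [Matrix.transpose_nonsing_inv, hsym]
  have hPk : pMom n k M h k t =
      M k k t *ᵥ iteratedDeriv k h t + (M (k - 1) k t)ᵀ *ᵥ iteratedDeriv (k - 1) h t := by
    show (if k = 0 then _ else if k = k then _ else _) = _
    rw [if_neg hk0, if_pos rfl]
  have hP0 : pMom n k M h 0 t = M 0 0 t *ᵥ h t + M 0 1 t *ᵥ iteratedDeriv 1 h t := by
    show (if (0 : ℕ) = 0 then _ else _) = _
    rw [if_pos rfl]
  have hPmid : ∀ j : ℕ, j ≠ 0 → j ≠ k → pMom n k M h j t =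
      M j j t *ᵥ iteratedDeriv j h t + (M (j - 1) j t)ᵀ *ᵥ iteratedDeriv (j - 1) h t +
        M j (j + 1) t *ᵥ iteratedDeriv (j + 1) h t := by
    intro j hj0 hjk
    show (if j = 0 then _ else if j = k then _ else _) = _
    rw [if_neg hj0, if_neg hjk]
  -- last z block equals pMom k
  have hzlast : ∀ b : Fin k, (b : ℕ) = k - 1 → (fun c => zLeg n k M h t (b, c)) =
      M k k t *ᵥ iteratedDeriv k h t + (M (k - 1) k t)ᵀ *ᵥ iteratedDeriv (k - 1) h t := by
    intro b hb
    funext r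
    show (∑ j ∈ Finset.Icc ((b : ℕ) + 1) k,
        ((-1 : ℝ) ^ (j - ((b : ℕ) + 1))) • iteratedDeriv (j - ((b : ℕ) + 1)) (pMom n k M h j) t) r = _
    rw [hb]
    have hbk : k - 1 + 1 = k := by omega
    rw [hbk, Finset.Icc_self, Finset.sum_singleton, Nat.sub_self, pow_zero, one_smul,
      iteratedDeriv_zero, hPk]
  -- Jacobi consequence
  have hjac0 : (∑ j ∈ Finset.Icc 1 k, ((-1 : ℝ) ^ (j - 1)) • iteratedDeriv j (pMom n k M h j) t)
      = pMom n k M h 0 t := by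
    have hjact := hjac t ht
    have hr : Finset.range (k + 1) = insert 0 (Finset.Icc 1 k) := by
      ext x; simp [Finset.mem_Icc, Finset.mem_range]; omega
    rw [hr, Finset.sum_insert (by simp)] at hjact
    rw [pow_zero, one_smul, iteratedDeriv_zero] at hjact
    have hterm : ∀ j ∈ Finset.Icc 1 k, ((-1 : ℝ) ^ j) • iteratedDeriv j (pMom n k M h j) t
        = -(((-1 : ℝ) ^ (j - 1)) • iteratedDeriv j (pMom n k M h j) t) := by
      intro j hj
      have hj1 := (Finset.mem_Icc.mp hj).1
      have hje : j = (j - 1) + 1 := by omega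
      rw [hje, pow_succ, Nat.add_sub_cancel, mul_neg_one, neg_smul]
    rw [Finset.sum_congr rfl hterm, Finset.sum_neg_distrib] at hjact
    exact (add_neg_eq_zero.mp hjact).symm
  -- recursion for middle blocks
  have hrec : ∀ bb : ℕ, 1 ≤ bb → bb ≤ k →
      (∑ j ∈ Finset.Icc (bb + 1) k, ((-1 : ℝ) ^ (j - (bb + 1))) •
          iteratedDeriv (j - bb) (pMom n k M h j) t)
      = pMom n k M h bb t - ∑ j ∈ Finset.Icc bb k, ((-1 : ℝ) ^ (j - bb)) •
          iteratedDeriv (j - bb) (pMom n k M h j) t := by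
    intro bb hb1 hbk
    have hsplit : Finset.Icc bb k = insert bb (Finset.Icc (bb + 1) k) := by
      ext x; simp [Finset.mem_Icc, Finset.mem_insert]; omega
    rw [hsplit, Finset.sum_insert (by simp)]
    have h0 : ((-1 : ℝ) ^ (bb - bb)) • iteratedDeriv (bb - bb) (pMom n k M h bb) t
        = pMom n k M h bb t := by
      rw [Nat.sub_self, pow_zero, one_smul, iteratedDeriv_zero]
    rw [h0]
    have hterm : ∀ j ∈ Finset.Icc (bb + 1) k, ((-1 : ℝ) ^ (j - bb)) •
        iteratedDeriv (j - bb) (pMom n k M h j) t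
        = -(((-1 : ℝ) ^ (j - (bb + 1))) • iteratedDeriv (j - bb) (pMom n k M h j) t) := by
      intro j hj
      have hj1 := (Finset.mem_Icc.mp hj).1
      have hje : j - bb = (j - (bb + 1)) + 1 := by omega
      rw [hje, pow_succ, mul_neg_one, neg_smul]
    rw [Finset.sum_congr rfl hterm, Finset.sum_neg_distrib]
    abel
  -- z block b-1 as a sum (for 1 ≤ b)
  have hzprev : ∀ (bb : ℕ) (hb1 : 1 ≤ bb) (hbk : bb ≤ k - 1),
      (fun c => zLeg n k M h t (⟨bb - 1, by omega⟩, c)) =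
      (∑ j ∈ Finset.Icc bb k, ((-1 : ℝ) ^ (j - bb)) •
        iteratedDeriv (j - bb) (pMom n k M h j) t) := by
    intro bb hb1 hbk
    funext r
    show (∑ j ∈ Finset.Icc (((⟨bb - 1, by omega⟩ : Fin k) : ℕ) + 1) k,
        ((-1 : ℝ) ^ (j - (((⟨bb - 1, by omega⟩ : Fin k) : ℕ) + 1))) •
          iteratedDeriv (j - (((⟨bb - 1, by omega⟩ : Fin k) : ℕ) + 1)) (pMom n k M h j) t) r = _
    have hv : ((⟨bb - 1, by omega⟩ : Fin k) : ℕ) + 1 = bb := by simp; omega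
    rw [hv]
  -- PART 1
  constructor
  · refine hasDerivAt_pi.2 fun p => ?_
    have hd := hasDA_iter hh (p.1 : ℕ) t p.2
    have hval : (Ablk n k M t *ᵥ yhat n k h t + Bblk n k M t *ᵥ zLeg n k M h t) p
        = iteratedDeriv ((p.1 : ℕ) + 1) h t p.2 := by
      rw [Pi.add_apply, Ablk_mulVec, Bblk_mulVec]
      by_cases hlt : (p.1 : ℕ) + 1 < k
      · have hne : ¬((p.1 : ℕ) = k - 1) := by omega
        rw [dif_pos hlt, if_neg hne, if_neg hne, add_zero, add_zero]
        rfl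
      · have hb : (p.1 : ℕ) = k - 1 := by have := p.1.isLt; omega
        rw [dif_neg hlt, if_pos hb, if_pos hb, zero_add]
        have hy : (fun c => yhat n k h t (p.1, c)) = iteratedDeriv (k - 1) h t := by
          funext c
          show iteratedDeriv ((p.1 : ℕ)) h t c = _
          rw [hb]
        have hvec : (-((M k k t)⁻¹ * (M (k - 1) k t)ᵀ)) *ᵥ iteratedDeriv (k - 1) h t +
            (M k k t)⁻¹ *ᵥ (M k k t *ᵥ iteratedDeriv k h t +
              (M (k - 1) k t)ᵀ *ᵥ iteratedDeriv (k - 1) h t)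
            = iteratedDeriv k h t := by
          rw [Matrix.mulVec_add, Matrix.mulVec_mulVec, Matrix.mulVec_mulVec, hinvmul,
            Matrix.one_mulVec, Matrix.neg_mulVec]
          abel
        have hcast : (∑ c, (-((M k k t)⁻¹ * (M (k - 1) k t)ᵀ)) p.2 c * yhat n k h t (p.1, c)) +
            (∑ c, (M k k t)⁻¹ p.2 c * zLeg n k M h t (p.1, c))
            = ((-((M k k t)⁻¹ * (M (k - 1) k t)ᵀ)) *ᵥ (fun c => yhat n k h t (p.1, c)) +
               (M k k t)⁻¹ *ᵥ (fun c => zLeg n k M h t (p.1, c))) p.2 := rfl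
        rw [hcast, hy, hzlast p.1 hb, hvec]
        have : (p.1 : ℕ) + 1 = k := by omega
        rw [this]
    rw [show (Ablk n k M t *ᵥ yhat n k h t + Bblk n k M t *ᵥ zLeg n k M h t) p
      = iteratedDeriv ((p.1 : ℕ) + 1) h t p.2 from hval]
    exact hd
  -- PART 2
  · refine hasDerivAt_pi.2 fun p => ?_
    set bb : ℕ := (p.1 : ℕ) with hbb
    have hdz : HasDerivAt (fun s => zLeg n k M h s p)
        ((∑ j ∈ Finset.Icc (bb + 1) k, ((-1 : ℝ) ^ (j - (bb + 1))) •
          iteratedDeriv (j - bb) (pMom n k M h j) t) p.2) t := by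
      have heq : (fun s => zLeg n k M h s p) = fun s =>
          ∑ j ∈ Finset.Icc (bb + 1) k, ((-1 : ℝ) ^ (j - (bb + 1))) *
            iteratedDeriv (j - (bb + 1)) (pMom n k M h j) s p.2 := by
        funext s
        show (∑ j ∈ Finset.Icc (bb + 1) k, ((-1 : ℝ) ^ (j - (bb + 1))) •
          iteratedDeriv (j - (bb + 1)) (pMom n k M h j) s) p.2 = _
        rw [Finset.sum_apply]
        exact Finset.sum_congr rfl fun j _ => by rw [Pi.smul_apply, smul_eq_mul]
      have hval : (∑ j ∈ Finset.Icc (bb + 1) k, ((-1 : ℝ) ^ (j - (bb + 1))) •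
            iteratedDeriv (j - bb) (pMom n k M h j) t) p.2
          = ∑ j ∈ Finset.Icc (bb + 1) k, ((-1 : ℝ) ^ (j - (bb + 1))) *
            iteratedDeriv (j - bb) (pMom n k M h j) t p.2 := by
        rw [Finset.sum_apply]
        exact Finset.sum_congr rfl fun j _ => by rw [Pi.smul_apply, smul_eq_mul]
      rw [heq, hval]
      apply HasDerivAt.fun_sum
      intro j hj
      have hj1 := (Finset.mem_Icc.mp hj).1
      have hje : j - bb = (j - (bb + 1)) + 1 := by omega
      rw [hje]
      exact (hasDA_iter (cdpMom hM hh j) (j - (bb + 1)) t p.2).const_mul _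
    have hval : (Cblk n k M t *ᵥ yhat n k h t - (Ablk n k M t)ᵀ *ᵥ zLeg n k M h t) p
        = (∑ j ∈ Finset.Icc (bb + 1) k, ((-1 : ℝ) ^ (j - (bb + 1))) •
          iteratedDeriv (j - bb) (pMom n k M h j) t) p.2 := by
      rw [Pi.sub_apply, Cblk_mulVec, Ablk_t_mulVec]
      by_cases hbl : bb = k - 1
      · -- last block
        by_cases hb0 : bb = 0
        · -- k = 1
          have hk1 : k = 1 := by omega
          subst hk1
          rw [if_pos hbl, dif_neg (by omega : ¬ (bb + 1 < 1)), dif_neg (by omega : ¬ (0 < bb)),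
            dif_neg (by omega : ¬ (0 < bb)), if_pos hbl, add_zero, add_zero, zero_add]
          simp only [show (1 : ℕ) - 1 = 0 by rfl]
          have hcast : (∑ c, (M 0 0 t - M 0 1 t * (M 1 1 t)⁻¹ * (M 0 1 t)ᵀ) p.2 c *
                yhat n 1 h t (p.1, c)) -
              (∑ c, (-((M 1 1 t)⁻¹ * (M 0 1 t)ᵀ)) c p.2 * zLeg n 1 M h t (p.1, c))
              = ((M 0 0 t - M 0 1 t * (M 1 1 t)⁻¹ * (M 0 1 t)ᵀ) *ᵥ
                  (fun c => yhat n 1 h t (p.1, c)) -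
                 (-((M 1 1 t)⁻¹ * (M 0 1 t)ᵀ))ᵀ *ᵥ (fun c => zLeg n 1 M h t (p.1, c))) p.2 := rfl
          rw [hcast]
          have hy : (fun c => yhat n 1 h t (p.1, c)) = iteratedDeriv 0 h t := by
            funext c
            show iteratedDeriv ((p.1 : ℕ)) h t c = _
            rw [← hbb, hbl]
          have hzl := hzlast p.1 hbl
          simp only [show (1 : ℕ) - 1 = 0 by rfl] at hzl
          rw [hy, hzl]
          have hjj : (∑ j ∈ Finset.Icc (bb + 1) 1, ((-1 : ℝ) ^ (j - (bb + 1))) •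
              iteratedDeriv (j - bb) (pMom n 1 M h j) t)
              = pMom n 1 M h 0 t := by
            have hb0' : bb = 0 := hbl
            rw [hb0']
            rw [Finset.sum_congr rfl fun j _ => by rw [Nat.sub_zero]]
            exact hjac0
          rw [hjj, hP0]
          have hvec : (M 0 0 t - M 0 1 t * (M 1 1 t)⁻¹ * (M 0 1 t)ᵀ) *ᵥ iteratedDeriv 0 h t -
              (-((M 1 1 t)⁻¹ * (M 0 1 t)ᵀ))ᵀ *ᵥ
                (M 1 1 t *ᵥ iteratedDeriv 1 h t + (M 0 1 t)ᵀ *ᵥ iteratedDeriv 0 h t)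
              = M 0 0 t *ᵥ h t + M 0 1 t *ᵥ iteratedDeriv 1 h t := by
            have htr : (-((M 1 1 t)⁻¹ * (M 0 1 t)ᵀ))ᵀ = -(M 0 1 t * (M 1 1 t)⁻¹) := by
              rw [Matrix.transpose_neg, Matrix.transpose_mul, Matrix.transpose_transpose, hinvsym]
            rw [htr, Matrix.neg_mulVec, Matrix.mulVec_add, Matrix.mulVec_mulVec,
              Matrix.mulVec_mulVec, hcanc 0, Matrix.sub_mulVec, iteratedDeriv_zero]
            abel
          rw [hvec]
        · -- k ≥ 2, bb = k - 1 ≥ 1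
          have hb1 : 1 ≤ bb := by omega
          rw [if_pos hbl, dif_neg (by omega : ¬ (bb + 1 < k)), dif_pos (by omega : 0 < bb),
            dif_pos (by omega : 0 < bb), if_pos hbl, add_zero]
          have hcast : (∑ c, (M (k - 1) (k - 1) t - M (k - 1) k t * (M k k t)⁻¹ *
                  (M (k - 1) k t)ᵀ) p.2 c * yhat n k h t (p.1, c)) +
              (∑ c, ((M (bb - 1) bb t)ᵀ) p.2 c *
                yhat n k h t (⟨bb - 1, by have := p.1.isLt; omega⟩, c)) -
              ((zLeg n k M h t (⟨bb - 1, by have := p.1.isLt; omega⟩, p.2)) +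
               (∑ c, (-((M k k t)⁻¹ * (M (k - 1) k t)ᵀ)) c p.2 * zLeg n k M h t (p.1, c)))
              = ((M (k - 1) (k - 1) t - M (k - 1) k t * (M k k t)⁻¹ * (M (k - 1) k t)ᵀ) *ᵥ
                  (fun c => yhat n k h t (p.1, c)) +
                 ((M (bb - 1) bb t)ᵀ) *ᵥ
                  (fun c => yhat n k h t (⟨bb - 1, by have := p.1.isLt; omega⟩, c)) -
                 ((fun c => zLeg n k M h t (⟨bb - 1, by have := p.1.isLt; omega⟩, c)) +
                  (-((M k k t)⁻¹ * (M (k - 1) k t)ᵀ))ᵀ *ᵥ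
                    (fun c => zLeg n k M h t (p.1, c)))) p.2 := rfl
          rw [hcast]
          have hy1 : (fun c => yhat n k h t (p.1, c)) = iteratedDeriv bb h t := rfl
          have hy2 : (fun c => yhat n k h t (⟨bb - 1, by have := p.1.isLt; omega⟩, c))
              = iteratedDeriv (bb - 1) h t := by
            funext c
            show iteratedDeriv ((⟨bb - 1, by have := p.1.isLt; omega⟩ : Fin k) : ℕ) h t c = _
            norm_num
          rw [hy1, hy2, hzlast p.1 hbl, hzprev bb hb1 (by omega), hrec bb hb1 (by omega)]
          have hPb := hPmid bb (by omega) (by omega)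
          rw [hPb]
          have hvec : (M (k - 1) (k - 1) t - M (k - 1) k t * (M k k t)⁻¹ * (M (k - 1) k t)ᵀ) *ᵥ
                iteratedDeriv bb h t +
              ((M (bb - 1) bb t)ᵀ) *ᵥ iteratedDeriv (bb - 1) h t -
              ((∑ j ∈ Finset.Icc bb k, ((-1 : ℝ) ^ (j - bb)) •
                iteratedDeriv (j - bb) (pMom n k M h j) t) +
               (-((M k k t)⁻¹ * (M (k - 1) k t)ᵀ))ᵀ *ᵥ
                 (M k k t *ᵥ iteratedDeriv k h t + (M (k - 1) k t)ᵀ *ᵥ iteratedDeriv (k - 1) h t))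
              = M bb bb t *ᵥ iteratedDeriv bb h t +
                (M (bb - 1) bb t)ᵀ *ᵥ iteratedDeriv (bb - 1) h t +
                M bb (bb + 1) t *ᵥ iteratedDeriv (bb + 1) h t -
                ∑ j ∈ Finset.Icc bb k, ((-1 : ℝ) ^ (j - bb)) •
                  iteratedDeriv (j - bb) (pMom n k M h j) t := by
            have htr : (-((M k k t)⁻¹ * (M (k - 1) k t)ᵀ))ᵀ = -(M (k - 1) k t * (M k k t)⁻¹) := by
              rw [Matrix.transpose_neg, Matrix.transpose_mul, Matrix.transpose_transpose, hinvsym]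
            have hbky : bb + 1 = k := by omega
            have hbbe : bb = k - 1 := hbl
            rw [htr, Matrix.neg_mulVec, Matrix.mulVec_add, Matrix.mulVec_mulVec,
              Matrix.mulVec_mulVec, hcanc (k - 1), Matrix.sub_mulVec, hbky, hbbe]
            abel
          rw [hvec]
      · -- bb < k - 1
        have hlt : bb + 1 < k := by have := p.1.isLt; omega
        rw [if_neg hbl, dif_pos hlt, if_neg hbl, add_zero]
        by_cases hb0 : bb = 0
        · rw [dif_neg (by omega : ¬ (0 < bb)), dif_neg (by omega : ¬ (0 < bb))]
          simp only [add_zero, zero_add, sub_zero]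
          have hcast : (∑ c, (M bb bb t) p.2 c * yhat n k h t (p.1, c)) +
              (∑ c, (M bb (bb + 1) t) p.2 c * yhat n k h t (⟨bb + 1, hlt⟩, c))
              = ((M bb bb t) *ᵥ (fun c => yhat n k h t (p.1, c)) +
                 (M bb (bb + 1) t) *ᵥ (fun c => yhat n k h t (⟨bb + 1, hlt⟩, c))) p.2 := rfl
          rw [hcast]
          have hy1 : (fun c => yhat n k h t (p.1, c)) = iteratedDeriv bb h t := rfl
          have hy2 : (fun c => yhat n k h t (⟨bb + 1, hlt⟩, c)) = iteratedDeriv (bb + 1) h t := rfl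
          rw [hy1, hy2, hb0]
          have hjj : (∑ j ∈ Finset.Icc (0 + 1) k, ((-1 : ℝ) ^ (j - (0 + 1))) •
              iteratedDeriv (j - 0) (pMom n k M h j) t)
              = pMom n k M h 0 t := by
            rw [Finset.sum_congr rfl fun j _ => by rw [Nat.sub_zero]]
            exact hjac0
          rw [hjj, hP0, iteratedDeriv_zero]
        · rw [dif_pos (by omega : 0 < bb), dif_pos (by omega : 0 < bb)]
          have hcast : (∑ c, (M bb bb t) p.2 c * yhat n k h t (p.1, c)) +
              (∑ c, (M bb (bb + 1) t) p.2 c * yhat n k h t (⟨bb + 1, hlt⟩, c)) +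
              (∑ c, ((M (bb - 1) bb t)ᵀ) p.2 c *
                yhat n k h t (⟨bb - 1, by have := p.1.isLt; omega⟩, c)) -
              (zLeg n k M h t (⟨bb - 1, by have := p.1.isLt; omega⟩, p.2))
              = ((M bb bb t) *ᵥ (fun c => yhat n k h t (p.1, c)) +
                 (M bb (bb + 1) t) *ᵥ (fun c => yhat n k h t (⟨bb + 1, hlt⟩, c)) +
                 ((M (bb - 1) bb t)ᵀ) *ᵥ
                   (fun c => yhat n k h t (⟨bb - 1, by have := p.1.isLt; omega⟩, c)) -
                 (fun c => zLeg n k M h t (⟨bb - 1, by have := p.1.isLt; omega⟩, c))) p.2 := rfl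
          rw [hcast]
          have hy1 : (fun c => yhat n k h t (p.1, c)) = iteratedDeriv bb h t := rfl
          have hy2 : (fun c => yhat n k h t (⟨bb + 1, hlt⟩, c)) = iteratedDeriv (bb + 1) h t := rfl
          have hy3 : (fun c => yhat n k h t (⟨bb - 1, by have := p.1.isLt; omega⟩, c))
              = iteratedDeriv (bb - 1) h t := rfl
          rw [hy1, hy2, hy3, hzprev bb (by omega) (by omega), hrec bb (by omega) (by omega),
            hPmid bb hb0 (by omega)]
          have hvec : M bb bb t *ᵥ iteratedDeriv bb h t +
              M bb (bb + 1) t *ᵥ iteratedDeriv (bb + 1) h t +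
              (M (bb - 1) bb t)ᵀ *ᵥ iteratedDeriv (bb - 1) h t -
              (∑ j ∈ Finset.Icc bb k, ((-1 : ℝ) ^ (j - bb)) •
                iteratedDeriv (j - bb) (pMom n k M h j) t)
              = M bb bb t *ᵥ iteratedDeriv bb h t +
                (M (bb - 1) bb t)ᵀ *ᵥ iteratedDeriv (bb - 1) h t +
                M bb (bb + 1) t *ᵥ iteratedDeriv (bb + 1) h t -
                ∑ j ∈ Finset.Icc bb k, ((-1 : ℝ) ^ (j - bb)) •
                  iteratedDeriv (j - bb) (pMom n k M h j) t := by abel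
          rw [hvec]
    rw [show (Cblk n k M t *ᵥ yhat n k h t - (Ablk n k M t)ᵀ *ᵥ zLeg n k M h t) p
      = _ from hval]
    exact hdz
end
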